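/- arXiv:2208.13493 — 12 statements merged into one kernel-verified Lean document; each statement's English description precedes it below -/
import Mathlib

section
/- Let G be a finite simple graph and v a vertex of G. Then str(v) = 0 if and only if v is a simplicial vertex, i.e., any two neighbors of v are adjacent. -/
namespace SimpleGraph

variable {V : Type*}

/-- A walk is a *geodesic* if it is a path whose length equals the distance
between its endpoints. -/
def IsGeodesic (G : SimpleGraph V) {u w : V} (p : G.Walk u w) : Prop :=
  p.IsPath ∧ p.length = G.dist u w

/-- A walk *passes through* `v` if `v` is an internal vertex of it. -/
def Walk.PassesThrough {G : SimpleGraph V} {u w : V} (p : G.Walk u w) (v : V) : Prop :=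
  v ∈ p.support ∧ v ≠ u ∧ v ≠ w

/-- The *stress* of a vertex `v`: the number of geodesics passing through `v`.
Each (undirected) geodesic is traversed in two directions, so we count directed
geodesics and halve. -/
noncomputable def stress (G : SimpleGraph V) (v : V) : ℕ :=
  {p : Σ u : V, Σ w : V, G.Walk u w |
    G.IsGeodesic p.2.2 ∧ p.2.2.PassesThrough v}.ncard / 2

end SimpleGraph

open SimpleGraph

private lemma key_aux {V : Type*} (G : SimpleGraph V) (v : V)
    (hs : ∀ a b : V, G.Adj v a → G.Adj v b → a ≠ b → G.Adj a b) :
    ∀ {u w : V} (p : G.Walk u w), p.IsPath → p.length = G.dist u w →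
      ¬ p.PassesThrough v := by
  intro u w p
  induction p with
  | nil =>
    intro _ _ hp
    obtain ⟨hmem, hne, _⟩ := hp
    simp only [SimpleGraph.Walk.support_nil, List.mem_singleton] at hmem
    exact hne hmem
  | @cons u x w h q ih =>
    intro hpath hlen hp
    obtain ⟨hmem, hnu, hnw⟩ := hp
    by_cases hvx : v = x
    · subst hvx
      -- p = u - v - ... ; since v ≠ w, q is a cons
      cases q with
      | nil => exact hnw rfl
      | @cons _ y _ h' q' =>
        -- u adj v, v adj y, u ≠ y, so u adj y; shortcut
        have huy : u ≠ y := by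
          intro hEq
          subst hEq
          have := hpath.support_nodup
          simp [SimpleGraph.Walk.support_cons] at this
        have hadj : G.Adj u y := hs u y h.symm h' huy
        have : G.dist u w ≤ (SimpleGraph.Walk.cons hadj q').length :=
          SimpleGraph.dist_le _
        simp only [SimpleGraph.Walk.length_cons] at this hlen
        omega
    · have hmem' : v ∈ q.support := by
        simp only [SimpleGraph.Walk.support_cons, List.mem_cons] at hmem
        exact hmem.resolve_left hnu
      have hqpath : q.IsPath := hpath.of_cons
      have hqlen : q.length = G.dist x w := by
        have h1 : G.dist x w ≤ q.length := SimpleGraph.dist_le _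
        have h2 : G.dist u w ≤ G.dist x w + 1 := by
          obtain ⟨r, hr⟩ := SimpleGraph.Reachable.exists_walk_length_eq_dist
            (⟨q⟩ : G.Reachable x w)
          have := SimpleGraph.dist_le (SimpleGraph.Walk.cons h r)
          simpa [hr] using this
        simp only [SimpleGraph.Walk.length_cons] at hlen
        omega
      exact ih hqpath hqlen ⟨hmem', hvx, hnw⟩

/-- `str(v) = 0` iff `v` is a simplicial vertex (any two neighbors of `v` are adjacent). -/
theorem stress_eq_zero_iff_simplicial {V : Type*} [Fintype V] (G : SimpleGraph V) (v : V) :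
    G.stress v = 0 ↔ ∀ a b : V, G.Adj v a → G.Adj v b → a ≠ b → G.Adj a b := by
  classical
  set S : Set (Σ u : V, Σ w : V, G.Walk u w) :=
    {p : Σ u : V, Σ w : V, G.Walk u w | G.IsGeodesic p.2.2 ∧ p.2.2.PassesThrough v} with hS
  have hfin : S.Finite := by
    have hsub : S ⊆ Set.range (fun q : Σ u : V, Σ w : V, G.Path u w =>
        (⟨q.1, q.2.1, q.2.2.1⟩ : Σ u : V, Σ w : V, G.Walk u w)) := by
      rintro ⟨u, w, p⟩ ⟨⟨hpath, _⟩, _⟩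
      exact ⟨⟨u, w, ⟨p, hpath⟩⟩, rfl⟩
    exact Set.Finite.subset (Set.finite_range _) hsub
  constructor
  · intro hzero a b hva hvb hab
    by_contra hnadj
    -- build the geodesic a - v - b
    have hav : G.Adj a v := hva.symm
    have p : G.Walk a b := SimpleGraph.Walk.cons hav (SimpleGraph.Walk.cons hvb SimpleGraph.Walk.nil)
    have hdist : G.dist a b = 2 := by
      have hle : G.dist a b ≤ 2 := by
        have := SimpleGraph.dist_le
          (SimpleGraph.Walk.cons hav (SimpleGraph.Walk.cons hvb SimpleGraph.Walk.nil))
        simpa using this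
      have hne0 : G.dist a b ≠ 0 := by
        rw [SimpleGraph.dist_ne_zero_iff_ne_and_reachable]
        exact ⟨hab, ⟨SimpleGraph.Walk.cons hav (SimpleGraph.Walk.cons hvb SimpleGraph.Walk.nil)⟩⟩
      have hne1 : G.dist a b ≠ 1 := fun h =>
        hnadj (SimpleGraph.dist_eq_one_iff_adj.mp h)
      omega
    have hgeo : ∀ (c d : V) (hcv : G.Adj c v) (hvd : G.Adj v d) (hcd : c ≠ d)
        (hdcd : G.dist c d = 2),
        (⟨c, d, SimpleGraph.Walk.cons hcv (SimpleGraph.Walk.cons hvd SimpleGraph.Walk.nil)⟩ :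
          Σ u : V, Σ w : V, G.Walk u w) ∈ S := by
      intro c d hcv hvd hcd hdcd
      refine ⟨⟨?_, ?_⟩, ?_⟩
      · rw [SimpleGraph.Walk.isPath_def]
        simp [SimpleGraph.Walk.support_cons, hcd, hcv.ne, hvd.ne]
      · simp [hdcd]
      · exact ⟨by simp, hcv.ne', hvd.ne⟩
    have h1 := hgeo a b hav hvb hab hdist
    have h2 := hgeo b a hvb.symm hva hab.symm (by rwa [SimpleGraph.dist_comm])
    have hcard : 1 < S.ncard := by
      rw [Set.one_lt_ncard_iff hfin]
      refine ⟨_, _, h1, h2, ?_⟩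
      intro hEq
      exact hab (congrArg Sigma.fst hEq)
    have : G.stress v = S.ncard / 2 := rfl
    omega
  · intro hs
    have hempty : S = ∅ := by
      ext ⟨u, w, p⟩
      simp only [Set.mem_empty_iff_false, iff_false]
      rintro ⟨⟨hpath, hlen⟩, hpt⟩
      exact key_aux G v hs p hpath hlen hpt
    simp [SimpleGraph.stress, ← hS, hempty]
end

section
/- In the complete bipartite graph K_{m,n} with partite sets A and B where |A| = m and |B| = n, every vertex v ∈ A has str(v) = n(n-1)/2 and every vertex v ∈ B has str(v) = m(m-1)/2. Consequently, the total stress of K_{m,n} is mn(m+n-2)/2. -/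
open SimpleGraph

variable {α β : Type*}

lemma cbg_adj_aux {u x w : α ⊕ β} (h : (completeBipartiteGraph α β).Adj u x)
    (hn : ¬ (completeBipartiteGraph α β).Adj u w) :
    (completeBipartiteGraph α β).Adj x w := by
  rcases u with a|b <;> rcases x with c|d <;> rcases w with e|f <;> simp_all

lemma cbg_key {u w v : α ⊕ β} {p : (completeBipartiteGraph α β).Walk u w}
    (hg : (completeBipartiteGraph α β).IsGeodesic p) (ht : p.PassesThrough v) :
    ∃ (h1 : (completeBipartiteGraph α β).Adj u v) (h2 : (completeBipartiteGraph α β).Adj v w),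
      u ≠ w ∧ p = Walk.cons h1 (Walk.cons h2 Walk.nil) := by
  obtain ⟨hp, hlen⟩ := hg
  obtain ⟨hmem, hvu, hvw⟩ := ht
  cases p with
  | nil => simp at hmem; exact absurd hmem hvu
  | @cons _ x _ h q =>
    cases q with
    | nil =>
      simp at hmem
      rcases hmem with h1 | h1
      · exact absurd h1 hvu
      · exact absurd h1 hvw
    | @cons _ y _ h' q' =>
      simp only [Walk.length_cons] at hlen
      have hnadj : ¬ (completeBipartiteGraph α β).Adj u w := by
        intro hadj
        have := dist_eq_one_iff_adj.mpr hadj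
        omega
      have hxw : (completeBipartiteGraph α β).Adj x w := cbg_adj_aux h hnadj
      have hle : (completeBipartiteGraph α β).dist u w ≤ 2 := by
        have := SimpleGraph.dist_le (Walk.cons h (Walk.cons hxw Walk.nil))
        simpa using this
      have hq0 : q'.length = 0 := by omega
      cases q' with
      | nil =>
        simp only [Walk.support_cons, Walk.support_nil, List.mem_cons,
          List.mem_singleton, List.not_mem_nil, or_false] at hmem
        have hvx : v = x := by tauto
        subst hvx
        have hne : u ≠ w := by
          simp [Walk.isPath_def] at hp
          tauto
        exact ⟨h, h', hne, rfl⟩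
      | cons _ _ => simp at hq0

lemma cbg_set_inl (a : α) :
    {p : Σ u : α ⊕ β, Σ w : α ⊕ β, (completeBipartiteGraph α β).Walk u w |
      (completeBipartiteGraph α β).IsGeodesic p.2.2 ∧ p.2.2.PassesThrough (Sum.inl a)}.ncard
    = Nat.card {q : β × β // q.1 ≠ q.2} := by
  set S := {p : Σ u : α ⊕ β, Σ w : α ⊕ β, (completeBipartiteGraph α β).Walk u w |
      (completeBipartiteGraph α β).IsGeodesic p.2.2 ∧ p.2.2.PassesThrough (Sum.inl a)} with hS
  rw [← Nat.card_coe_set_eq]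
  have adj1 : ∀ b : β, (completeBipartiteGraph α β).Adj (Sum.inr b) (Sum.inl a) := by simp
  have adj2 : ∀ b : β, (completeBipartiteGraph α β).Adj (Sum.inl a) (Sum.inr b) := by simp
  have hmemS : ∀ (q : β × β), q.1 ≠ q.2 →
      (⟨Sum.inr q.1, Sum.inr q.2, Walk.cons (adj1 q.1) (Walk.cons (adj2 q.2) Walk.nil)⟩ :
        Σ u : α ⊕ β, Σ w : α ⊕ β, (completeBipartiteGraph α β).Walk u w) ∈ S := by
    rintro ⟨b1, b2⟩ hne
    simp only [ne_eq] at hne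
    have hr : (completeBipartiteGraph α β).Reachable (Sum.inr b1) (Sum.inr b2) :=
      (Walk.cons (adj1 b1) (Walk.cons (adj2 b2) Walk.nil)).reachable
    have h0 : (completeBipartiteGraph α β).dist (Sum.inr b1) (Sum.inr b2) ≠ 0 := by
      intro hd
      have := hr.dist_eq_zero_iff.mp hd
      simp at this
      exact hne this
    have h1 : (completeBipartiteGraph α β).dist (Sum.inr b1) (Sum.inr b2) ≠ 1 := by
      intro hd
      have := dist_eq_one_iff_adj.mp hd
      simp at this
    have h2 : (completeBipartiteGraph α β).dist (Sum.inr b1) (Sum.inr b2) ≤ 2 := by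
      have := SimpleGraph.dist_le (Walk.cons (adj1 b1) (Walk.cons (adj2 b2) Walk.nil))
      simpa using this
    refine ⟨⟨?_, by simp only [Walk.length_cons, Walk.length_nil]; omega⟩,
      by simp, by simp, by simp⟩
    simp [Walk.isPath_def, hne]
  let f : {q : β × β // q.1 ≠ q.2} → S := fun q =>
    ⟨⟨Sum.inr q.1.1, Sum.inr q.1.2, Walk.cons (adj1 q.1.1) (Walk.cons (adj2 q.1.2) Walk.nil)⟩,
      hmemS q.1 q.2⟩
  have hbij : Function.Bijective f := by
    constructor
    · rintro ⟨⟨b1, b2⟩, h⟩ ⟨⟨b1', b2'⟩, h'⟩ heq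
      have e0 := congrArg Subtype.val heq
      have e1 : (Sum.inr b1 : α ⊕ β) = Sum.inr b1' := congrArg Sigma.fst e0
      have e2 : (Sum.inr b2 : α ⊕ β) = Sum.inr b2' := congrArg (fun s => s.2.1) e0
      simp only [Sum.inr.injEq] at e1 e2
      exact Subtype.ext (Prod.ext e1 e2)
    · rintro ⟨⟨u, w, p⟩, hgeo, hpt⟩
      obtain ⟨h1, h2, hne, hpe⟩ := cbg_key (u := u) (w := w) (p := p) hgeo hpt
      subst hpe
      rcases u with a'|b1
      · simp at h1
      rcases w with a'|b2
      · simp at h2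
      have hb : b1 ≠ b2 := fun h => hne (by rw [h])
      exact ⟨⟨(b1, b2), hb⟩, rfl⟩
  exact (Nat.card_eq_of_bijective f hbij).symm

lemma card_ne_pairs (n : ℕ) : Nat.card {q : Fin n × Fin n // q.1 ≠ q.2} = n * (n - 1) := by
  rw [Nat.card_eq_fintype_card]
  have e : {q : Fin n × Fin n // q.1 = q.2} ≃ Fin n :=
    { toFun := fun q => q.1.1, invFun := fun b => ⟨(b, b), rfl⟩,
      left_inv := by rintro ⟨⟨x, y⟩, h⟩; simp at h; subst h; rfl,
      right_inv := fun b => rfl }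
  have hc := Fintype.card_subtype_compl (fun q : Fin n × Fin n => q.1 = q.2)
  simp only [ne_eq]
  rw [hc, Fintype.card_congr e]
  simp only [Fintype.card_prod, Fintype.card_fin]
  exact (Nat.mul_pred n n).symm

lemma cbg_set_inr (b : β) :
    {p : Σ u : α ⊕ β, Σ w : α ⊕ β, (completeBipartiteGraph α β).Walk u w |
      (completeBipartiteGraph α β).IsGeodesic p.2.2 ∧ p.2.2.PassesThrough (Sum.inr b)}.ncard
    = Nat.card {q : α × α // q.1 ≠ q.2} := by
  set S := {p : Σ u : α ⊕ β, Σ w : α ⊕ β, (completeBipartiteGraph α β).Walk u w |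
      (completeBipartiteGraph α β).IsGeodesic p.2.2 ∧ p.2.2.PassesThrough (Sum.inr b)} with hS
  rw [← Nat.card_coe_set_eq]
  have adj1 : ∀ a : α, (completeBipartiteGraph α β).Adj (Sum.inl a) (Sum.inr b) := by simp
  have adj2 : ∀ a : α, (completeBipartiteGraph α β).Adj (Sum.inr b) (Sum.inl a) := by simp
  have hmemS : ∀ (q : α × α), q.1 ≠ q.2 →
      (⟨Sum.inl q.1, Sum.inl q.2, Walk.cons (adj1 q.1) (Walk.cons (adj2 q.2) Walk.nil)⟩ :
        Σ u : α ⊕ β, Σ w : α ⊕ β, (completeBipartiteGraph α β).Walk u w) ∈ S := by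
    rintro ⟨a1, a2⟩ hne
    simp only [ne_eq] at hne
    have hr : (completeBipartiteGraph α β).Reachable (Sum.inl a1) (Sum.inl a2) :=
      (Walk.cons (adj1 a1) (Walk.cons (adj2 a2) Walk.nil)).reachable
    have h0 : (completeBipartiteGraph α β).dist (Sum.inl a1) (Sum.inl a2) ≠ 0 := by
      intro hd
      have := hr.dist_eq_zero_iff.mp hd
      simp at this
      exact hne this
    have h1 : (completeBipartiteGraph α β).dist (Sum.inl a1) (Sum.inl a2) ≠ 1 := by
      intro hd
      have := dist_eq_one_iff_adj.mp hd
      simp at this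
    have h2 : (completeBipartiteGraph α β).dist (Sum.inl a1) (Sum.inl a2) ≤ 2 := by
      have := SimpleGraph.dist_le (Walk.cons (adj1 a1) (Walk.cons (adj2 a2) Walk.nil))
      simpa using this
    refine ⟨⟨?_, by simp only [Walk.length_cons, Walk.length_nil]; omega⟩,
      by simp, by simp, by simp⟩
    simp [Walk.isPath_def, hne]
  let f : {q : α × α // q.1 ≠ q.2} → S := fun q =>
    ⟨⟨Sum.inl q.1.1, Sum.inl q.1.2, Walk.cons (adj1 q.1.1) (Walk.cons (adj2 q.1.2) Walk.nil)⟩,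
      hmemS q.1 q.2⟩
  have hbij : Function.Bijective f := by
    constructor
    · rintro ⟨⟨a1, a2⟩, h⟩ ⟨⟨a1', a2'⟩, h'⟩ heq
      have e0 := congrArg Subtype.val heq
      have e1 : (Sum.inl a1 : α ⊕ β) = Sum.inl a1' := congrArg Sigma.fst e0
      have e2 : (Sum.inl a2 : α ⊕ β) = Sum.inl a2' := congrArg (fun s => s.2.1) e0
      simp only [Sum.inl.injEq] at e1 e2
      exact Subtype.ext (Prod.ext e1 e2)
    · rintro ⟨⟨u, w, p⟩, hgeo, hpt⟩
      obtain ⟨h1, h2, hne, hpe⟩ := cbg_key (u := u) (w := w) (p := p) hgeo hpt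
      subst hpe
      rcases u with a1|b'
      swap
      · simp at h1
      rcases w with a2|b'
      swap
      · simp at h2
      have ha : a1 ≠ a2 := fun h => hne (by rw [h])
      exact ⟨⟨(a1, a2), ha⟩, rfl⟩
  exact (Nat.card_eq_of_bijective f hbij).symm


/-- In `K_{m,n}`, each vertex of the part of size `m` has stress `n(n-1)/2`, each vertex
of the part of size `n` has stress `m(m-1)/2`, and the total stress is `mn(m+n-2)/2`. -/
theorem stress_completeBipartiteGraph (m n : ℕ) :
    (∀ a : Fin m, (completeBipartiteGraph (Fin m) (Fin n)).stress (Sum.inl a) =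
        n * (n - 1) / 2) ∧
    (∀ b : Fin n, (completeBipartiteGraph (Fin m) (Fin n)).stress (Sum.inr b) =
        m * (m - 1) / 2) ∧
    ∑ v : Fin m ⊕ Fin n, (completeBipartiteGraph (Fin m) (Fin n)).stress v =
        m * n * (m + n - 2) / 2 := by
  have hA : ∀ a : Fin m, (completeBipartiteGraph (Fin m) (Fin n)).stress (Sum.inl a) =
      n * (n - 1) / 2 := by
    intro a
    unfold SimpleGraph.stress
    rw [cbg_set_inl, card_ne_pairs]
  have hB : ∀ b : Fin n, (completeBipartiteGraph (Fin m) (Fin n)).stress (Sum.inr b) =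
      m * (m - 1) / 2 := by
    intro b
    unfold SimpleGraph.stress
    rw [cbg_set_inr, card_ne_pairs]
  refine ⟨hA, hB, ?_⟩
  rw [Fintype.sum_sum_type]
  simp only [hA, hB, Finset.sum_const, Finset.card_univ, Fintype.card_fin, smul_eq_mul]
  have hev : ∀ k : ℕ, ∃ p, k * (k - 1) = 2 * p := by
    intro k
    cases k with
    | zero => exact ⟨0, rfl⟩
    | succ k =>
      obtain ⟨r, hr⟩ := Nat.even_mul_succ_self k
      exact ⟨r, by rw [Nat.succ_sub_one, Nat.mul_comm, hr]; ring⟩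
  obtain ⟨p, hp⟩ := hev n
  obtain ⟨q, hq⟩ := hev m
  have base : m * (n * (n - 1)) + n * (m * (m - 1)) = m * n * (m + n - 2) := by
    cases m with
    | zero => simp
    | succ m' =>
      cases n with
      | zero => simp
      | succ n' =>
        have h2 : m' + 1 + (n' + 1) - 2 = m' + n' := by omega
        rw [h2, Nat.succ_sub_one, Nat.succ_sub_one]
        ring
  have hkey : m * n * (m + n - 2) = 2 * (m * p + n * q) := by
    rw [← base, hp, hq]; ring
  rw [hp, hq, hkey, Nat.mul_div_cancel_left _ (by norm_num : (0:ℕ) < 2),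
    Nat.mul_div_cancel_left _ (by norm_num : (0:ℕ) < 2),
    Nat.mul_div_cancel_left _ (by norm_num : (0:ℕ) < 2)]
end

section
/- If n ≥ 3 is odd, then every vertex v of the cycle C_n on n vertices has str(v) = (n-1)(n-3)/8, and consequently the total stress of C_n equals n(n-1)(n-3)/8. -/
open SimpleGraph
open scoped Fin.NatCast Fin.CommRing

section Arc
variable {n : ℕ} [NeZero n]

private lemma CG.adj_succ (hn : 3 ≤ n) (u : Fin n) : (cycleGraph n).Adj u (u + 1) := by
  rw [cycleGraph_adj']
  right
  rw [add_sub_cancel_left]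
  rw [Fin.val_one']
  exact Nat.mod_eq_of_lt (by omega)

private lemma CG.adj_pred (hn : 3 ≤ n) (u : Fin n) : (cycleGraph n).Adj u (u - 1) := by
  rw [cycleGraph_adj']
  left
  rw [sub_sub_cancel]
  rw [Fin.val_one']
  exact Nat.mod_eq_of_lt (by omega)

private def CG.arcR (hn : 3 ≤ n) (u : Fin n) : (m : ℕ) → (cycleGraph n).Walk u (u + (m : Fin n))
  | 0 => Walk.nil.copy rfl (by simp)
  | (m+1) => (Walk.cons (CG.adj_succ hn u) (CG.arcR hn (u + 1) m)).copy rfl (by push_cast; ring)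

private def CG.arcL (hn : 3 ≤ n) (u : Fin n) : (m : ℕ) → (cycleGraph n).Walk u (u - (m : Fin n))
  | 0 => Walk.nil.copy rfl (by simp)
  | (m+1) => (Walk.cons (CG.adj_pred hn u) (CG.arcL hn (u - 1) m)).copy rfl (by push_cast; ring)

private lemma CG.arcR_length (hn : 3 ≤ n) (u : Fin n) (m : ℕ) : (CG.arcR hn u m).length = m := by
  induction m generalizing u with
  | zero => simp [CG.arcR]
  | succ m ih => simp [CG.arcR, ih]

private lemma CG.arcL_length (hn : 3 ≤ n) (u : Fin n) (m : ℕ) : (CG.arcL hn u m).length = m := by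
  induction m generalizing u with
  | zero => simp [CG.arcL]
  | succ m ih => simp [CG.arcL, ih]

private lemma CG.arcR_support (hn : 3 ≤ n) (u : Fin n) (m : ℕ) :
    (CG.arcR hn u m).support = (List.range (m+1)).map (fun i : ℕ => u + (i : Fin n)) := by
  induction m generalizing u with
  | zero => simp [CG.arcR, List.range_succ]
  | succ m ih =>
    rw [CG.arcR, Walk.support_copy, Walk.support_cons, ih]
    conv_rhs => rw [List.range_succ_eq_map, List.map_cons, List.map_map]
    congr 1
    · simp
    · apply List.map_congr_left
      intro i _
      simp only [Function.comp_apply, Nat.succ_eq_add_one]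
      push_cast
      ring

private lemma CG.arcL_support (hn : 3 ≤ n) (u : Fin n) (m : ℕ) :
    (CG.arcL hn u m).support = (List.range (m+1)).map (fun i : ℕ => u - (i : Fin n)) := by
  induction m generalizing u with
  | zero => simp [CG.arcL, List.range_succ]
  | succ m ih =>
    rw [CG.arcL, Walk.support_copy, Walk.support_cons, ih]
    conv_rhs => rw [List.range_succ_eq_map, List.map_cons, List.map_map]
    congr 1
    · simp
    · apply List.map_congr_left
      intro i _
      simp only [Function.comp_apply, Nat.succ_eq_add_one]
      push_cast
      ring

private lemma CG.nodup_map_range {m : ℕ} (hm : m < n) (f : ℕ → Fin n)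
    (hf : ∀ i j : ℕ, f i = f j → (i : Fin n) = (j : Fin n)) :
    (((List.range (m+1)).map f).Nodup) := by
  apply List.Nodup.map_on _ List.nodup_range
  intro i hi j hj hij
  rw [List.mem_range] at hi hj
  have h2 := congrArg Fin.val (hf i j hij)
  rwa [Fin.val_natCast, Fin.val_natCast, Nat.mod_eq_of_lt (by omega),
    Nat.mod_eq_of_lt (by omega)] at h2

private lemma CG.arcR_isPath (hn : 3 ≤ n) (u : Fin n) {m : ℕ} (hm : m < n) :
    (CG.arcR hn u m).IsPath := by
  rw [Walk.isPath_def, CG.arcR_support]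
  exact CG.nodup_map_range hm _ (fun i j h => by exact add_left_cancel h)

private lemma CG.arcL_isPath (hn : 3 ≤ n) (u : Fin n) {m : ℕ} (hm : m < n) :
    (CG.arcL hn u m).IsPath := by
  rw [Walk.isPath_def, CG.arcL_support]
  apply CG.nodup_map_range hm (fun i : ℕ => u - (i : Fin n))
  intro i j h
  have h2 : (-(i:Fin n)) = -(j:Fin n) := by
    have := congrArg (fun x => x - u) h
    simpa [sub_eq_add_neg] using this
  exact neg_injective h2

private lemma walk_eq_of_support_eq {V : Type*} {G : SimpleGraph V} {u w : V}
    (p q : G.Walk u w) (h : p.support = q.support) : p = q := by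
  induction p with
  | nil =>
    cases q with
    | nil => rfl
    | cons hadj q => simp [Walk.support_cons] at h
  | @cons _ y _ hadj p ih =>
    cases q with
    | nil => simp [Walk.support_cons] at h
    | @cons _ z _ hadj' q =>
      simp only [Walk.support_cons] at h
      have h2 : p.support = q.support := by injection h
      have hx : y = z := by
        rw [p.support_eq_cons, q.support_eq_cons] at h2
        injection h2
      subst hx
      rw [ih q h2]

private lemma CG.end_of_support {G : SimpleGraph (Fin n)} {u w : Fin n} (p : G.Walk u w)
    (f : ℕ → Fin n) (h : p.support = (List.range (p.length+1)).map f) : w = f p.length := by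
  have h1 : p.support.getLast? = some w := by
    rw [List.getLast?_eq_getLast p.support_ne_nil, p.getLast_support]
  rw [h, List.range_succ, List.map_append, List.map_cons, List.map_nil,
    List.getLast?_concat] at h1
  exact (Option.some_injective _ h1).symm

private lemma CG.adj_cases (hn : 3 ≤ n) {u x : Fin n} (h : (cycleGraph n).Adj u x) :
    x = u + 1 ∨ x = u - 1 := by
  rw [cycleGraph_adj'] at h
  have h1 : (1 : Fin n).val = 1 := by rw [Fin.val_one']; exact Nat.mod_eq_of_lt (by omega)
  rcases h with h | h
  · right
    have h2 : u - x = 1 := Fin.ext (by rw [h, h1])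
    linear_combination -h2
  · left
    have h2 : x - u = 1 := Fin.ext (by rw [h, h1])
    linear_combination h2

private lemma CG.path_support (hn : 3 ≤ n) {u w : Fin n} (p : (cycleGraph n).Walk u w)
    (hp : p.IsPath) :
    p.support = (List.range (p.length+1)).map (fun i : ℕ => u + (i : Fin n)) ∨
    p.support = (List.range (p.length+1)).map (fun i : ℕ => u - (i : Fin n)) := by
  induction p with
  | nil => left; simp [List.range_succ]
  | cons hadj q ih =>
    rename_i x₀ x₁ x₂
    rw [Walk.cons_isPath_iff] at hp
    obtain ⟨hq, hu⟩ := hp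
    have h1 : (1 : Fin n).val = 1 := by rw [Fin.val_one']; exact Nat.mod_eq_of_lt (by omega)
    rcases CG.adj_cases hn hadj with hx | hx
    · subst hx
      rcases ih hq with hs | hs
      · left
        rw [Walk.support_cons, hs, Walk.length_cons]
        conv_rhs => rw [show q.length + 1 + 1 = (q.length + 1) + 1 from rfl,
          List.range_succ_eq_map, List.map_cons, List.map_map]
        congr 1
        · simp
        · apply List.map_congr_left
          intro i _
          simp only [Function.comp_apply, Nat.succ_eq_add_one]
          push_cast
          ring
      · -- q is a left arc from x₀ + 1; must have length 0
        rcases Nat.eq_zero_or_pos q.length with hL | hL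
        · left
          rw [Walk.support_cons, hs, hL, Walk.length_cons, hL]
          simp [List.range_succ]
        · exfalso
          apply hu
          rw [hs, List.mem_map]
          exact ⟨1, by rw [List.mem_range]; omega, by push_cast; ring⟩
    · subst hx
      rcases ih hq with hs | hs
      · -- q is a right arc from x₀ - 1; must have length 0
        rcases Nat.eq_zero_or_pos q.length with hL | hL
        · right
          rw [Walk.support_cons, hs, hL, Walk.length_cons, hL]
          simp [List.range_succ]
        · exfalso
          apply hu
          rw [hs, List.mem_map]
          exact ⟨1, by rw [List.mem_range]; omega, by push_cast; ring⟩
      · right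
        rw [Walk.support_cons, hs, Walk.length_cons]
        conv_rhs => rw [show q.length + 1 + 1 = (q.length + 1) + 1 from rfl,
          List.range_succ_eq_map, List.map_cons, List.map_map]
        congr 1
        · simp
        · apply List.map_congr_left
          intro i _
          simp only [Function.comp_apply, Nat.succ_eq_add_one]
          push_cast
          ring

private lemma CG.path_length_lt (hn : 3 ≤ n) {u w : Fin n} {p : (cycleGraph n).Walk u w}
    (hp : p.IsPath) : p.length < n := by
  have := hp.length_lt
  simpa using this

private lemma CG.val_pos {a : Fin n} (ha : a ≠ 0) : 1 ≤ a.val := by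
  rcases Nat.eq_zero_or_pos a.val with h | h
  · exact absurd (Fin.ext (by simp [h])) ha
  · exact h

private lemma CG.dvd_eq {x m : ℕ} (h1 : 0 < x) (h2 : x < 2 * m) (hd : m ∣ x) : x = m := by
  obtain ⟨t, ht⟩ := hd
  rcases t with _ | _ | t
  · omega
  · omega
  · exfalso
    have he : m * (t + 1 + 1) = m * t + 2 * m := by ring
    omega

private lemma CG.sub_val_add (hn : 3 ≤ n) {u w : Fin n} (hne : u ≠ w) :
    (w - u).val + (u - w).val = n := by
  have h1 : 1 ≤ (w - u).val := CG.val_pos (sub_ne_zero.mpr hne.symm)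
  have h2 : 1 ≤ (u - w).val := CG.val_pos (sub_ne_zero.mpr hne)
  have h3 : (w - u) + (u - w) = 0 := by ring
  have h4 : ((w - u).val + (u - w).val) % n = 0 := by
    have h5 := congrArg Fin.val h3
    rw [Fin.val_add, Fin.val_zero n] at h5
    exact h5
  have h5 : (w - u).val < n := Fin.is_lt _
  have h6 : (u - w).val < n := Fin.is_lt _
  exact CG.dvd_eq (by omega) (by omega) (Nat.dvd_of_mod_eq_zero h4)

private lemma CG.dist_eq (hn : 3 ≤ n) {u w : Fin n} (hne : u ≠ w) :
    (cycleGraph n).dist u w = min (w - u).val (n - (w - u).val) := by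
  have hsum := CG.sub_val_add hn hne
  have hwR : u + (((w - u).val : ℕ) : Fin n) = w := by rw [Fin.cast_val_eq_self]; ring
  have hwL : u - (((u - w).val : ℕ) : Fin n) = w := by rw [Fin.cast_val_eq_self]; ring
  have hle1 : (cycleGraph n).dist u w ≤ (w - u).val := by
    have h8 := SimpleGraph.dist_le ((CG.arcR hn u (w - u).val).copy rfl hwR)
    rwa [Walk.length_copy, CG.arcR_length] at h8
  have hle2 : (cycleGraph n).dist u w ≤ (u - w).val := by
    have h8 := SimpleGraph.dist_le ((CG.arcL hn u (u - w).val).copy rfl hwL)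
    rwa [Walk.length_copy, CG.arcL_length] at h8
  have hne' : Nonempty (Fin n) := ⟨⟨0, by omega⟩⟩
  have hconn : (cycleGraph n).Connected := Connected.mk cycleGraph_preconnected
  obtain ⟨q, hq⟩ := hconn.exists_walk_length_eq_dist u w
  have hrp : q.bypass.IsPath := q.bypass_isPath
  have hrlen : q.bypass.length = (cycleGraph n).dist u w := by
    have h9 := SimpleGraph.dist_le q.bypass
    have h10 := q.length_bypass_le
    omega
  have hrn : q.bypass.length < n := CG.path_length_lt hn hrp
  have hkey : (cycleGraph n).dist u w = (w - u).val ∨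
      (cycleGraph n).dist u w = (u - w).val := by
    rcases CG.path_support hn q.bypass hrp with hs | hs
    · left
      have e1 := CG.end_of_support q.bypass _ hs
      have e2 : (w - u) = ((q.bypass.length : ℕ) : Fin n) := by
        linear_combination e1
      have e3 := congrArg Fin.val e2
      rw [Fin.val_natCast, Nat.mod_eq_of_lt hrn] at e3
      rw [e3, hrlen]
    · right
      have e1 := CG.end_of_support q.bypass _ hs
      have e2 : (u - w) = ((q.bypass.length : ℕ) : Fin n) := by
        linear_combination -e1
      have e3 := congrArg Fin.val e2
      rw [Fin.val_natCast, Nat.mod_eq_of_lt hrn] at e3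
      rw [e3, hrlen]
  obtain ⟨b, hb⟩ : ∃ x, (w - u).val = x := ⟨_, rfl⟩
  obtain ⟨c, hc⟩ : ∃ x, (u - w).val = x := ⟨_, rfl⟩
  simp only [hb, hc] at hsum hle1 hle2 hkey ⊢
  omega

private lemma CG.path_unique (hn : 3 ≤ n) (ho : Odd n) {u w : Fin n}
    (p q : (cycleGraph n).Walk u w) (hp : p.IsPath) (hq : q.IsPath)
    (hl : p.length = q.length) : p = q := by
  apply walk_eq_of_support_eq
  have hpn := CG.path_length_lt hn hp
  have hmix : ∀ {p' q' : (cycleGraph n).Walk u w}, p'.IsPath → p'.length = q'.length →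
      p'.support = (List.range (p'.length+1)).map (fun i : ℕ => u + (i : Fin n)) →
      q'.support = (List.range (q'.length+1)).map (fun i : ℕ => u - (i : Fin n)) →
      p'.support = q'.support := by
    intro p' q' hp' hl' h1 h2
    have e1 := CG.end_of_support p' _ h1
    have e2 := CG.end_of_support q' _ h2
    rw [← hl'] at e2
    have hz : ((2 * p'.length : ℕ) : Fin n) = 0 := by
      push_cast
      linear_combination e2 - e1
    have hdvd : n ∣ 2 * p'.length := Fin.natCast_eq_zero.mp hz
    have hcop : Nat.Coprime n 2 := ho.coprime_two_right
    have hdvd2 : n ∣ p'.length := hcop.dvd_of_dvd_mul_left hdvd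
    have hL : p'.length = 0 := Nat.eq_zero_of_dvd_of_lt hdvd2 (CG.path_length_lt hn hp')
    rw [h1, h2, ← hl', hL]
    simp [List.range_succ]
  rcases CG.path_support hn p hp with h1 | h1 <;> rcases CG.path_support hn q hq with h2 | h2
  · rw [h1, h2, hl]
  · exact hmix hp hl h1 h2
  · exact (hmix hq hl.symm h2 h1).symm
  · rw [h1, h2, hl]

private lemma CG.natCast_zero_iff {a : ℕ} (ha : a < n) : (a : Fin n) = 0 ↔ a = 0 := by
  rw [Fin.natCast_eq_zero]
  constructor
  · intro h; exact Nat.eq_zero_of_dvd_of_lt h ha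
  · rintro rfl; exact dvd_zero n

private lemma CG.cast_inj {a b : ℕ} (ha : a < n) (hb : b < n) (h : (a : Fin n) = b) :
    a = b := by
  have h2 := congrArg Fin.val h
  rwa [Fin.val_natCast, Fin.val_natCast, Nat.mod_eq_of_lt ha, Nat.mod_eq_of_lt hb] at h2

private lemma CG.dist_add (hn : 3 ≤ n) (u : Fin n) {m : ℕ} (hm : 2 * m < n) :
    (cycleGraph n).dist u (u + (m : Fin n)) = m := by
  rcases Nat.eq_zero_or_pos m with h0 | h0
  · subst h0; simp
  · have hmn : m < n := by omega
    have hne : u ≠ u + (m : Fin n) := by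
      intro h
      have h2 : (m : Fin n) = 0 := by linear_combination -h
      rw [CG.natCast_zero_iff hmn] at h2
      omega
    rw [CG.dist_eq hn hne]
    have h1 : (u + (m : Fin n) - u) = (m : Fin n) := by ring
    rw [h1, Fin.val_natCast, Nat.mod_eq_of_lt hmn]
    omega

private lemma CG.dist_sub (hn : 3 ≤ n) (u : Fin n) {m : ℕ} (hm : 2 * m < n) :
    (cycleGraph n).dist u (u - (m : Fin n)) = m := by
  rcases Nat.eq_zero_or_pos m with h0 | h0
  · subst h0; simp
  · have hmn : m < n := by omega
    have hne : u ≠ u - (m : Fin n) := by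
      intro h
      have h2 : (m : Fin n) = 0 := by linear_combination h
      rw [CG.natCast_zero_iff hmn] at h2
      omega
    have h1 : (u - (u - (m : Fin n))) = (m : Fin n) := by ring
    have h2 : (u - (m : Fin n) - u).val + m = n := by
      have h3 := CG.sub_val_add hn hne
      rw [h1, Fin.val_natCast, Nat.mod_eq_of_lt hmn] at h3
      exact h3
    rw [CG.dist_eq hn hne]
    obtain ⟨x, hx⟩ : ∃ x, (u - (m : Fin n) - u).val = x := ⟨_, rfl⟩
    rw [hx] at h2 ⊢
    omega

private lemma CG.sigma_walk_ext {V : Type*} {G : SimpleGraph V} {u w : V}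
    {p q : G.Walk u w} (h : p = q) :
    (⟨u, ⟨w, p⟩⟩ : Σ a : V, Σ b : V, G.Walk a b) = ⟨u, ⟨w, q⟩⟩ := by rw [h]

private def CG.F (hn : 3 ≤ n) (v : Fin n) :
    Bool × ((_ : ℕ) × ℕ) → Σ u : Fin n, Σ w : Fin n, (cycleGraph n).Walk u w
  | (true, ⟨a, b⟩) => ⟨v - (a : Fin n), v + (b : Fin n),
      (CG.arcR hn (v - (a : Fin n)) (a + b)).copy rfl (by push_cast; ring)⟩
  | (false, ⟨a, b⟩) => ⟨v + (a : Fin n), v - (b : Fin n),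
      (CG.arcL hn (v + (a : Fin n)) (a + b)).copy rfl (by push_cast; ring)⟩

private lemma CG.stress_set (hn : 3 ≤ n) (ho : Odd n) {k : ℕ} (hk : n = 2 * k + 1) (v : Fin n) :
    {p : Σ u : Fin n, Σ w : Fin n, (cycleGraph n).Walk u w |
      (cycleGraph n).IsGeodesic p.2.2 ∧ p.2.2.PassesThrough v}.ncard = k * (k - 1) := by
  have hk1 : 1 ≤ k := by omega
  set A : Finset ((_ : ℕ) × ℕ) := (Finset.Icc 1 k).sigma (fun a => Finset.Icc 1 (k - a)) with hA
  set D : Finset (Bool × ((_ : ℕ) × ℕ)) := Finset.univ ×ˢ A with hD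
  have hmemD : ∀ d : Bool × ((_ : ℕ) × ℕ),
      d ∈ D ↔ 1 ≤ d.2.1 ∧ 1 ≤ d.2.2 ∧ d.2.1 + d.2.2 ≤ k := by
    rintro ⟨dir, a, b⟩
    simp only [hD, hA, Finset.mem_product, Finset.mem_univ, Finset.mem_sigma,
      Finset.mem_Icc, true_and]
    omega
  have hFmem : ∀ d ∈ D, (CG.F hn v d) ∈ {p : Σ u : Fin n, Σ w : Fin n, (cycleGraph n).Walk u w |
      (cycleGraph n).IsGeodesic p.2.2 ∧ p.2.2.PassesThrough v} := by
    rintro ⟨dir, a, b⟩ hd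
    rw [hmemD] at hd
    obtain ⟨ha, hb, hab⟩ := hd
    simp only at ha hb hab
    have hab2 : 2 * (a + b) < n := by omega
    have han : a < n := by omega
    have hbn : b < n := by omega
    cases dir
    · simp only [CG.F, Set.mem_setOf_eq]
      refine ⟨⟨?_, ?_⟩, ?_, ?_, ?_⟩
      · rw [Walk.isPath_copy]
        exact CG.arcL_isPath hn _ (by omega)
      · rw [Walk.length_copy, CG.arcL_length]
        have hpf : (v + (a : Fin n)) - ((a + b : ℕ) : Fin n) = v - (b : Fin n) := by
          push_cast; ring
        rw [← hpf, CG.dist_sub hn _ hab2]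
      · rw [Walk.support_copy, CG.arcL_support, List.mem_map]
        exact ⟨a, by rw [List.mem_range]; omega, by ring⟩
      · intro h
        have h2 : (a : Fin n) = 0 := by linear_combination -h
        rw [CG.natCast_zero_iff han] at h2; omega
      · intro h
        have h2 : (b : Fin n) = 0 := by linear_combination h
        rw [CG.natCast_zero_iff hbn] at h2; omega
    · simp only [CG.F, Set.mem_setOf_eq]
      refine ⟨⟨?_, ?_⟩, ?_, ?_, ?_⟩
      · rw [Walk.isPath_copy]
        exact CG.arcR_isPath hn _ (by omega)
      · rw [Walk.length_copy, CG.arcR_length]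
        have hpf : (v - (a : Fin n)) + ((a + b : ℕ) : Fin n) = v + (b : Fin n) := by
          push_cast; ring
        rw [← hpf, CG.dist_add hn _ hab2]
      · rw [Walk.support_copy, CG.arcR_support, List.mem_map]
        exact ⟨a, by rw [List.mem_range]; omega, by ring⟩
      · intro h
        have h2 : (a : Fin n) = 0 := by linear_combination h
        rw [CG.natCast_zero_iff han] at h2; omega
      · intro h
        have h2 : (b : Fin n) = 0 := by linear_combination -h
        rw [CG.natCast_zero_iff hbn] at h2; omega
  have hinj : Set.InjOn (CG.F hn v) ↑D := by
    rintro ⟨d1, a1, b1⟩ h1 ⟨d2, a2, b2⟩ h2 heq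
    rw [Finset.mem_coe, hmemD] at h1 h2
    simp only at h1 h2
    obtain ⟨ha1, hb1, hab1⟩ := h1
    obtain ⟨ha2, hb2, hab2⟩ := h2
    have e1 := congrArg (fun s : (Σ u : Fin n, Σ w : Fin n, (cycleGraph n).Walk u w) => s.1) heq
    have e2 := congrArg (fun s : (Σ u : Fin n, Σ w : Fin n, (cycleGraph n).Walk u w) => s.2.1) heq
    cases d1 <;> cases d2 <;> simp only [CG.F] at e1 e2
    · have ea : a1 = a2 := CG.cast_inj (by omega) (by omega) ((add_right_inj v).mp e1)
      have eb : b1 = b2 := CG.cast_inj (by omega) (by omega) (sub_right_inj.mp e2)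
      subst ea; subst eb; rfl
    · exfalso
      have h3 : ((a1 + a2 : ℕ) : Fin n) = 0 := by push_cast; linear_combination e1
      rw [CG.natCast_zero_iff (by omega)] at h3
      omega
    · exfalso
      have h3 : ((a1 + a2 : ℕ) : Fin n) = 0 := by push_cast; linear_combination -e1
      rw [CG.natCast_zero_iff (by omega)] at h3
      omega
    · have ea : a1 = a2 := CG.cast_inj (by omega) (by omega) (sub_right_inj.mp e1)
      have eb : b1 = b2 := CG.cast_inj (by omega) (by omega) ((add_right_inj v).mp e2)
      subst ea; subst eb; rfl
  have himg : {p : Σ u : Fin n, Σ w : Fin n, (cycleGraph n).Walk u w |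
      (cycleGraph n).IsGeodesic p.2.2 ∧ p.2.2.PassesThrough v} = (CG.F hn v) '' ↑D := by
    apply Set.eq_of_subset_of_subset
    · rintro ⟨u, w, p⟩ ⟨⟨hpath, hlen⟩, hv, hvu, hvw⟩
      simp only at hpath hlen hv hvu hvw
      have hne : u ≠ w := by
        rintro rfl
        have hL0 : p.length = 0 := by rw [hlen]; simp
        have hnil : p.support = [u] := Walk.nil_iff_support_eq.mp (Walk.nil_iff_length_eq.mpr hL0)
        rw [hnil] at hv
        simp at hv
        exact hvu hv
      have hLn : p.length < n := CG.path_length_lt hn hpath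
      have hdist := CG.dist_eq hn hne
      obtain ⟨L, hL⟩ : ∃ L, p.length = L := ⟨_, rfl⟩
      rcases CG.path_support hn p hpath with hs | hs
      · have e1 := CG.end_of_support p _ hs
        rw [hL] at e1 hs hLn
        have e2 : (w - u).val = L := by
          have h4 : w - u = (L : Fin n) := by linear_combination e1
          rw [h4, Fin.val_natCast, Nat.mod_eq_of_lt hLn]
        have hLk : L ≤ k := by
          obtain ⟨x, hx⟩ : ∃ x, (w - u).val = x := ⟨_, rfl⟩
          rw [hdist, hx] at hlen
          rw [hx] at e2
          omega
        rw [hs, List.mem_map] at hv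
        obtain ⟨i, hir, hiv⟩ := hv
        rw [List.mem_range] at hir
        have hi1 : 1 ≤ i := by
          rcases Nat.eq_zero_or_pos i with h | h
          · exfalso; apply hvu; rw [← hiv, h]; simp
          · exact h
        have hiL : i < L := by
          rcases Nat.lt_or_ge i L with h | h
          · exact h
          · exfalso; apply hvw
            have h5 : i = L := by omega
            rw [← hiv, h5]
            exact e1.symm
        refine ⟨(true, ⟨i, L - i⟩), ?_, ?_⟩
        · rw [Finset.mem_coe, hmemD]
          refine ⟨hi1, ?_, ?_⟩
          · show 1 ≤ L - i
            omega
          · show i + (L - i) ≤ k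
            omega
        · have hu : v - (i : Fin n) = u := by linear_combination -hiv
          have hw : v + ((L - i : ℕ) : Fin n) = w := by
            rw [Nat.cast_sub (by omega)]
            linear_combination -e1 - hiv
          subst hu
          subst hw
          simp only [CG.F]
          refine CG.sigma_walk_ext (CG.path_unique hn ho _ p ?_ hpath ?_)
          · rw [Walk.isPath_copy]
            exact CG.arcR_isPath hn _ (by omega)
          · rw [Walk.length_copy, CG.arcR_length]
            omega
      · have e1 := CG.end_of_support p _ hs
        rw [hL] at e1 hs hLn
        have e2 : (u - w).val = L := by
          have h4 : u - w = (L : Fin n) := by linear_combination -e1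
          rw [h4, Fin.val_natCast, Nat.mod_eq_of_lt hLn]
        have hsum := CG.sub_val_add hn hne
        have hLk : L ≤ k := by
          obtain ⟨x, hx⟩ : ∃ x, (w - u).val = x := ⟨_, rfl⟩
          obtain ⟨y, hy⟩ : ∃ y, (u - w).val = y := ⟨_, rfl⟩
          rw [hdist, hx] at hlen
          rw [hx, hy] at hsum
          rw [hy] at e2
          omega
        rw [hs, List.mem_map] at hv
        obtain ⟨i, hir, hiv⟩ := hv
        rw [List.mem_range] at hir
        have hi1 : 1 ≤ i := by
          rcases Nat.eq_zero_or_pos i with h | h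
          · exfalso; apply hvu; rw [← hiv, h]; simp
          · exact h
        have hiL : i < L := by
          rcases Nat.lt_or_ge i L with h | h
          · exact h
          · exfalso; apply hvw
            have h5 : i = L := by omega
            rw [← hiv, h5]
            exact e1.symm
        refine ⟨(false, ⟨i, L - i⟩), ?_, ?_⟩
        · rw [Finset.mem_coe, hmemD]
          refine ⟨hi1, ?_, ?_⟩
          · show 1 ≤ L - i
            omega
          · show i + (L - i) ≤ k
            omega
        · have hu : v + (i : Fin n) = u := by linear_combination -hiv
          have hw : v - ((L - i : ℕ) : Fin n) = w := by
            rw [Nat.cast_sub (by omega)]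
            linear_combination -e1 - hiv
          subst hu
          subst hw
          simp only [CG.F]
          refine CG.sigma_walk_ext (CG.path_unique hn ho _ p ?_ hpath ?_)
          · rw [Walk.isPath_copy]
            exact CG.arcL_isPath hn _ (by omega)
          · rw [Walk.length_copy, CG.arcL_length]
            omega
    · rintro x ⟨d, hd, rfl⟩
      exact hFmem d hd
  rw [himg, Set.ncard_image_of_injOn hinj, Set.ncard_coe_finset]
  rw [hD, Finset.card_product, hA, Finset.card_sigma]
  have hcA : ∑ a ∈ Finset.Icc 1 k, (Finset.Icc 1 (k - a)).card
      = ∑ a ∈ Finset.Icc 1 k, (k - a) := by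
    apply Finset.sum_congr rfl
    intro a _
    rw [Nat.card_Icc]
    omega
  rw [hcA]
  have hIcc : Finset.Icc 1 k = Finset.Ico 1 (k + 1) := by rw [Finset.Ico_add_one_right_eq_Icc]
  rw [hIcc, Finset.sum_Ico_eq_sum_range]
  have h6 : k + 1 - 1 = k := by omega
  rw [h6]
  have h7 : ∑ i ∈ Finset.range k, (k - (1 + i)) = ∑ i ∈ Finset.range k, i := by
    rw [← Finset.sum_range_reflect (fun j => j) k]
    apply Finset.sum_congr rfl
    intro i hi
    rw [Finset.mem_range] at hi
    omega
  rw [h7]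
  have h8 : (Finset.univ : Finset Bool).card = 2 := by simp
  rw [h8, mul_comm 2, ← Finset.sum_range_id_mul_two k]

end Arc

/-- For odd `n ≥ 3`, every vertex of the cycle `C_n` has stress `(n-1)(n-3)/8`, and
the total stress of `C_n` is `n(n-1)(n-3)/8`. -/
theorem stress_cycleGraph_odd (n : ℕ) (hn : 3 ≤ n) (hodd : Odd n) :
    (∀ v : Fin n, (SimpleGraph.cycleGraph n).stress v = (n - 1) * (n - 3) / 8) ∧
    ∑ v : Fin n, (SimpleGraph.cycleGraph n).stress v = n * (n - 1) * (n - 3) / 8 := by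
  haveI : NeZero n := ⟨by omega⟩
  obtain ⟨m, hm⟩ := hodd
  have hk : n = 2 * m + 1 := by omega
  have hodd' : Odd n := ⟨m, hm⟩
  obtain ⟨j, hj⟩ : ∃ j, m = j + 1 := ⟨m - 1, by omega⟩
  obtain ⟨e, he⟩ : ∃ e, m * (m - 1) = e + e := by
    obtain ⟨e, he⟩ := Nat.even_mul_succ_self j
    refine ⟨e, ?_⟩
    rw [hj, Nat.add_sub_cancel, mul_comm]
    omega
  have hstress : ∀ v : Fin n, (SimpleGraph.cycleGraph n).stress v = e := by
    intro v
    unfold SimpleGraph.stress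
    rw [CG.stress_set hn hodd' hk v]
    omega
  have hjj : j * (j + 1) = e + e := by
    have h1 : m * (m - 1) = (j + 1) * j := by rw [hj, Nat.add_sub_cancel]
    have h2 : (j + 1) * j = j * (j + 1) := mul_comm _ _
    omega
  have harith : (n - 1) * (n - 3) = 8 * e := by
    have h1 : n - 1 = 2 * (j + 1) := by omega
    have h2 : n - 3 = 2 * j := by omega
    rw [h1, h2]
    have h3 : 2 * (j + 1) * (2 * j) = 4 * (j * (j + 1)) := by ring
    rw [h3, hjj]
    omega
  constructor
  · intro v
    rw [hstress v, harith, Nat.mul_div_cancel_left e (by norm_num : 0 < 8)]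
  · have hsum : ∑ v : Fin n, (SimpleGraph.cycleGraph n).stress v = n * e := by
      rw [Finset.sum_congr rfl (fun v _ => hstress v), Finset.sum_const, Finset.card_univ,
        Fintype.card_fin, smul_eq_mul]
    rw [hsum]
    have h4 : n * (n - 1) * (n - 3) = 8 * (n * e) := by
      rw [mul_assoc, harith]
      ring
    rw [h4, Nat.mul_div_cancel_left _ (by norm_num : 0 < 8)]
end

section
/- If n ≥ 4 is even, then every vertex v of the cycle C_n on n vertices has str(v) = n(n-2)/8, and consequently the total stress of C_n equals n²(n-2)/8. -/
open SimpleGraph Finset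
open scoped Fin.NatCast Fin.CommRing

namespace CycleAux

variable {N : ℕ}

local notation "n" => N + 2

lemma adj_succ (u : Fin n) : (cycleGraph n).Adj u (u + 1) := by
  rw [cycleGraph_adj]; right; ring_nf

/-- The forward arc from `u` of length `L`. -/
def arc (u : Fin n) : (L : ℕ) → (cycleGraph n).Walk u (u + (L : Fin n))
  | 0 => Walk.nil.copy rfl (by simp)
  | (L+1) => (Walk.cons (adj_succ u) (arc (u+1) L)).copy rfl (by push_cast; ring)

@[simp] lemma arc_length (u : Fin n) (L : ℕ) : (arc u L).length = L := by
  induction L generalizing u with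
  | zero => simp [arc]
  | succ L ih => simp [arc, ih]

lemma arc_support (u : Fin n) (L : ℕ) :
    (arc u L).support = (List.range (L+1)).map (fun (i : ℕ) => u + (i : Fin n)) := by
  induction L generalizing u with
  | zero => simp [arc, List.range_succ]
  | succ L ih =>
      rw [arc, Walk.support_copy, Walk.support_cons, ih]
      rw [show List.range (L+1+1) = 0 :: (List.range (L+1)).map Nat.succ from
        List.range_succ_eq_map, List.map_cons, List.map_map]
      simp only [Nat.cast_zero, add_zero]
      congr 1
      apply List.map_congr_left
      intro i _
      simp only [Function.comp_apply, Nat.succ_eq_add_one]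
      push_cast; ring

lemma mem_arc_support {u v : Fin n} {L : ℕ} :
    v ∈ (arc u L).support ↔ ∃ i : ℕ, i ≤ L ∧ v = u + (i : Fin n) := by
  rw [arc_support]
  simp only [List.mem_map, List.mem_range]
  constructor
  · rintro ⟨i, hi, rfl⟩; exact ⟨i, by omega, rfl⟩
  · rintro ⟨i, hi, rfl⟩; exact ⟨i, by omega, rfl⟩

lemma natCast_inj_of_lt {i j : ℕ} (hi : i < n) (hj : j < n)
    (h : (i : Fin n) = (j : Fin n)) : i = j := by
  have := congrArg Fin.val h
  rwa [Fin.val_natCast, Fin.val_natCast, Nat.mod_eq_of_lt hi, Nat.mod_eq_of_lt hj] at this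

lemma arc_isPath (u : Fin n) {L : ℕ} (hL : L < n) : (arc u L).IsPath := by
  rw [Walk.isPath_def, arc_support]
  refine List.Nodup.map_on ?_ List.nodup_range
  intro i hi j hj hij
  simp only [List.mem_range] at hi hj
  exact natCast_inj_of_lt (by omega) (by omega) (add_left_cancel hij)

end CycleAux

namespace CycleAux

variable {N : ℕ}
local notation "n" => N + 2

lemma adj_pred (u : Fin n) : (cycleGraph n).Adj u (u - 1) := by
  rw [cycleGraph_adj]; left; ring_nf

/-- The backward arc from `u` of length `L`. -/
def arcDown (u : Fin n) : (L : ℕ) → (cycleGraph n).Walk u (u - (L : Fin n))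
  | 0 => Walk.nil.copy rfl (by simp)
  | (L+1) => (Walk.cons (adj_pred u) (arcDown (u-1) L)).copy rfl (by push_cast; ring)

@[simp] lemma arcDown_length (u : Fin n) (L : ℕ) : (arcDown u L).length = L := by
  induction L generalizing u with
  | zero => simp [arcDown]
  | succ L ih => simp [arcDown, ih]

lemma arcDown_support (u : Fin n) (L : ℕ) :
    (arcDown u L).support = (List.range (L+1)).map (fun (i : ℕ) => u - (i : Fin n)) := by
  induction L generalizing u with
  | zero => simp [arcDown, List.range_succ]
  | succ L ih =>
      rw [arcDown, Walk.support_copy, Walk.support_cons, ih]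
      rw [show List.range (L+1+1) = 0 :: (List.range (L+1)).map Nat.succ from
        List.range_succ_eq_map, List.map_cons, List.map_map]
      simp only [Nat.cast_zero, sub_zero]
      congr 1
      apply List.map_congr_left
      intro i _
      simp only [Function.comp_apply, Nat.succ_eq_add_one]
      push_cast; ring

lemma mem_arcDown_support {u v : Fin n} {L : ℕ} :
    v ∈ (arcDown u L).support ↔ ∃ i : ℕ, i ≤ L ∧ v = u - (i : Fin n) := by
  rw [arcDown_support]
  simp only [List.mem_map, List.mem_range]
  constructor
  · rintro ⟨i, hi, rfl⟩; exact ⟨i, by omega, rfl⟩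
  · rintro ⟨i, hi, rfl⟩; exact ⟨i, by omega, rfl⟩

lemma arcDown_isPath (u : Fin n) {L : ℕ} (hL : L < n) : (arcDown u L).IsPath := by
  rw [Walk.isPath_def, arcDown_support]
  refine List.Nodup.map_on ?_ List.nodup_range
  intro i hi j hj hij
  simp only [List.mem_range] at hi hj
  have : u - (i : Fin n) = u - (j : Fin n) := hij
  have h2 : (i : Fin n) = (j : Fin n) := by rwa [sub_right_inj] at hij
  exact natCast_inj_of_lt (by omega) (by omega) h2

/-- Every path in the cycle graph is an up-arc or a down-arc. -/
lemma walk_classify {u w : Fin n} (p : (cycleGraph n).Walk u w) (hp : p.IsPath) :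
    (∃ (L : ℕ) (h : u + (L : Fin n) = w), p = (arc u L).copy rfl h) ∨
    (∃ (L : ℕ) (h : u - (L : Fin n) = w), p = (arcDown u L).copy rfl h) := by
  induction p with
  | nil => left; exact ⟨0, by simp, by simp [arc]⟩
  | @cons u x w h q ih =>
    rw [Walk.cons_isPath_iff] at hp
    obtain ⟨hq, hu⟩ := hp
    rcases cycleGraph_adj.mp h with h1 | h1
    · -- u - x = 1, i.e. x = u - 1
      have hx : x = u - 1 := by rw [← h1]; ring
      subst hx
      rcases ih hq with ⟨L, hL, rfl⟩ | ⟨L, hL, rfl⟩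
      · -- q goes up from u - 1
        match L, hL with
        | 0, hL =>
          -- w = u - 1 : p is a down-arc of length 1
          right
          refine ⟨1, by simpa using hL, ?_⟩
          simp only [arc, arcDown, Walk.cons_copy, Walk.copy_copy, Walk.copy_nil]
        | (L+1), hL =>
          exfalso
          apply hu
          rw [Walk.support_copy, mem_arc_support]
          exact ⟨1, by omega, by push_cast; ring⟩
      · -- q goes down from u - 1 : p is a down-arc
        right
        refine ⟨L + 1, by rw [← hL]; push_cast; ring, ?_⟩
        simp only [arcDown, Walk.cons_copy, Walk.copy_copy]
    · -- x - u = 1, i.e. x = u + 1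
      have hx : x = u + 1 := by rw [← h1]; ring
      subst hx
      rcases ih hq with ⟨L, hL, rfl⟩ | ⟨L, hL, rfl⟩
      · -- q goes up from u + 1 : p is an up-arc
        left
        refine ⟨L + 1, by rw [← hL]; push_cast; ring, ?_⟩
        simp only [arc, Walk.cons_copy, Walk.copy_copy]
      · match L, hL with
        | 0, hL =>
          left
          refine ⟨1, by simpa using hL, ?_⟩
          simp only [arc, arcDown, Walk.cons_copy, Walk.copy_copy, Walk.copy_nil]
        | (L+1), hL =>
          exfalso
          apply hu
          rw [Walk.support_copy, mem_arcDown_support]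
          exact ⟨1, by omega, by push_cast; ring⟩

end CycleAux

namespace CycleAux

variable {N : ℕ}
local notation "n" => N + 2

lemma dist_formula (u w : Fin n) :
    (cycleGraph n).dist u w = min (w - u).val ((u - w).val) := by
  apply le_antisymm
  · apply le_min
    · have h : u + (((w - u).val : ℕ) : Fin n) = w := by
        rw [Fin.cast_val_eq_self]; ring
      have := SimpleGraph.dist_le ((arc u (w - u).val).copy rfl h)
      simpa using this
    · have h : u - (((u - w).val : ℕ) : Fin n) = w := by
        rw [Fin.cast_val_eq_self]; ring
      have := SimpleGraph.dist_le ((arcDown u (u - w).val).copy rfl h)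
      simpa using this
  · obtain ⟨p, hp, hlen⟩ := cycleGraph_connected.exists_path_of_dist u w
    rcases walk_classify p hp with ⟨L, hL, rfl⟩ | ⟨L, hL, rfl⟩
    · have hwu : w - u = (L : Fin n) := by rw [← hL]; ring
      have : (w - u).val ≤ L := by rw [hwu, Fin.val_natCast]; exact Nat.mod_le _ _
      simp only [Walk.length_copy, arc_length] at hlen
      calc min (w - u).val (u - w).val ≤ (w - u).val := min_le_left _ _
        _ ≤ L := this
        _ = _ := hlen
    · have hwu : u - w = (L : Fin n) := by rw [← hL]; ring
      have : (u - w).val ≤ L := by rw [hwu, Fin.val_natCast]; exact Nat.mod_le _ _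
      simp only [Walk.length_copy, arcDown_length] at hlen
      calc min (w - u).val (u - w).val ≤ (u - w).val := min_le_right _ _
        _ ≤ L := this
        _ = _ := hlen

lemma val_add_val (u w : Fin n) :
    (w - u).val + (u - w).val = 0 ∨ (w - u).val + (u - w).val = n := by
  have h0 : ((w - u).val + (u - w).val) % n = 0 := by
    have : (w - u) + (u - w) = 0 := by ring
    have h := congrArg Fin.val this
    rwa [Fin.val_add] at h
  have h1 : ((w - u).val) < n := Fin.is_lt _
  have h2 : ((u - w).val) < n := Fin.is_lt _
  obtain ⟨c, hc⟩ := Nat.dvd_of_mod_eq_zero h0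
  match c, hc with
  | 0, hc => left; omega
  | 1, hc => right; omega
  | (c+2), hc =>
    exfalso
    have : (N+2) * 2 ≤ (N+2) * (c+2) := Nat.mul_le_mul_left _ (by omega)
    omega

lemma dist_eq_of_le_half {m : ℕ} (hm : n = 2 * m) (u w : Fin n) (L : ℕ) (hL : L ≤ m)
    (hw : u + (L : Fin n) = w) : (cycleGraph n).dist u w = L := by
  have hk : (w - u).val = L := by
    rw [← hw]
    have : u + (L : Fin n) - u = (L : Fin n) := by ring
    rw [this, Fin.val_natCast, Nat.mod_eq_of_lt (by omega)]
  have hsum := val_add_val u w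
  have hk' : ((u - w).val) < n := Fin.is_lt _
  rw [dist_formula, hk]
  rw [hk] at hsum
  omega

lemma dist_le_half {m : ℕ} (hm : n = 2 * m) (u w : Fin n) :
    (cycleGraph n).dist u w ≤ m := by
  have hsum := val_add_val u w
  have h1 : ((w - u).val) < n := Fin.is_lt _
  have h2 : ((u - w).val) < n := Fin.is_lt _
  rw [dist_formula]
  omega

end CycleAux

namespace CycleAux

variable {N : ℕ}
local notation "n" => N + 2

/-- The parameter set: pairs `(a, b)` with `a, b ≥ 1` and `a + b ≤ m`. -/
def T (m : ℕ) : Finset (ℕ × ℕ) :=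
  (Finset.range (m+1) ×ˢ Finset.range (m+1)).filter
    (fun ab => 1 ≤ ab.1 ∧ 1 ≤ ab.2 ∧ ab.1 + ab.2 ≤ m)

lemma mem_T {m : ℕ} {ab : ℕ × ℕ} :
    ab ∈ T m ↔ 1 ≤ ab.1 ∧ 1 ≤ ab.2 ∧ ab.1 + ab.2 ≤ m := by
  simp only [T, Finset.mem_filter, Finset.mem_product, Finset.mem_range]
  constructor
  · rintro ⟨-, h⟩; exact h
  · rintro ⟨h1, h2, h3⟩; exact ⟨⟨by omega, by omega⟩, h1, h2, h3⟩

lemma T_card (m : ℕ) : (T m).card * 2 = m * (m - 1) := by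
  classical
  have hT : T m = (Finset.Icc 1 m).biUnion
      (fun a => {a} ×ˢ Finset.Icc 1 (m - a)) := by
    ext ⟨a, b⟩
    simp only [mem_T, Finset.mem_biUnion, Finset.mem_Icc, Finset.mem_product,
      Finset.mem_singleton]
    constructor
    · rintro ⟨h1, h2, h3⟩; exact ⟨a, ⟨h1, by omega⟩, rfl, h2, by omega⟩
    · rintro ⟨c, ⟨hc1, hc2⟩, rfl, hb1, hb2⟩; exact ⟨hc1, hb1, by omega⟩
  rw [hT, Finset.card_biUnion]
  · have : ∀ a ∈ Finset.Icc 1 m, ({a} ×ˢ Finset.Icc 1 (m - a)).card = m - a := by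
      intro a _
      rw [Finset.card_product, Finset.card_singleton, Nat.card_Icc]
      omega
    rw [Finset.sum_congr rfl this, ← Finset.Ico_add_one_right_eq_Icc, Finset.sum_Ico_eq_sum_range]
    have h2 : ∀ i ∈ Finset.range (m + 1 - 1), m - (1 + i) = m - 1 - i := by
      intro i _; omega
    rw [Finset.sum_congr rfl h2]
    have h3 : m + 1 - 1 = m := by omega
    rw [h3, Finset.sum_range_reflect (fun j => j) m, Finset.sum_range_id_mul_two]
  · intro x _ y _ hxy
    simp only [Finset.disjoint_left, Finset.mem_product, Finset.mem_singleton]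
    rintro ⟨a, b⟩ ⟨rfl, -⟩ ⟨rfl, -⟩
    exact hxy rfl

lemma endpoint_up (v : Fin n) (a b : ℕ) :
    (v - (a : Fin n)) + ((a + b : ℕ) : Fin n) = v + (b : Fin n) := by
  rw [Nat.cast_add]; ring

lemma endpoint_down (v : Fin n) (a b : ℕ) :
    (v + (a : Fin n)) - ((a + b : ℕ) : Fin n) = v - (b : Fin n) := by
  rw [Nat.cast_add]; ring

/-- Parametrization of directed geodesics through `v`. -/
def F (v : Fin n) : Bool × ℕ × ℕ → (Σ u : Fin n, Σ w : Fin n, (cycleGraph n).Walk u w)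
  | (true, a, b) => ⟨v - (a : Fin n), v + (b : Fin n),
      (arc (v - (a : Fin n)) (a + b)).copy rfl (endpoint_up v a b)⟩
  | (false, a, b) => ⟨v + (a : Fin n), v - (b : Fin n),
      (arcDown (v + (a : Fin n)) (a + b)).copy rfl (endpoint_down v a b)⟩

lemma natCast_ne_zero {a : ℕ} (h1 : 1 ≤ a) (h2 : a < n) : (a : Fin n) ≠ 0 := by
  intro h
  have := congrArg Fin.val h
  rw [Fin.val_natCast, Nat.mod_eq_of_lt h2] at this
  simp at this
  omega

lemma eq_n_of_natCast_eq_zero {a : ℕ} (h0 : (a : Fin n) = 0) (h1 : 1 ≤ a)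
    (h2 : a < 2 * (N + 2)) : a = N + 2 := by
  have := congrArg Fin.val h0
  rw [Fin.val_natCast] at this
  simp only [Fin.val_zero] at this
  obtain ⟨c, hc⟩ := Nat.dvd_of_mod_eq_zero this
  match c, hc with
  | 0, hc => omega
  | 1, hc => omega
  | (c+2), hc =>
    exfalso
    have : (N+2) * 2 ≤ (N+2) * (c+2) := Nat.mul_le_mul_left _ (by omega)
    omega

end CycleAux

namespace CycleAux

variable {N : ℕ}
local notation "n" => N + 2

lemma geodesic_set_eq {m : ℕ} (hm : (N + 2) = 2 * m) (v : Fin n) :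
    {p : Σ u : Fin n, Σ w : Fin n, (cycleGraph n).Walk u w |
      (cycleGraph n).IsGeodesic p.2.2 ∧ p.2.2.PassesThrough v}
      = F v '' ↑((Finset.univ : Finset Bool) ×ˢ T m) := by
  apply Set.Subset.antisymm
  · rintro ⟨u, w, p⟩ ⟨⟨hpath, hlen⟩, hsup, hvu, hvw⟩
    dsimp only at hpath hlen hsup hvu hvw
    rcases walk_classify p hpath with ⟨L, hL, rfl⟩ | ⟨L, hL, rfl⟩
    · rw [Walk.length_copy, arc_length] at hlen
      have hLm : L ≤ m := by rw [hlen]; exact dist_le_half hm u w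
      rw [Walk.support_copy, mem_arc_support] at hsup
      obtain ⟨i, hiL, hvi⟩ := hsup
      have hi1 : 1 ≤ i := by
        rcases Nat.eq_zero_or_pos i with rfl | h
        · exact absurd (by simpa using hvi) hvu
        · exact h
      have hiL' : i < L := by
        rcases Nat.lt_or_ge i L with h | h
        · exact h
        · exfalso; apply hvw
          have : i = L := by omega
          subst this
          rw [hvi, hL]
      obtain ⟨b, rfl⟩ : ∃ b, L = i + b := ⟨L - i, by omega⟩
      have hu : v - (i : Fin n) = u := by rw [hvi]; ring
      have hw2 : v + (b : Fin n) = w := by rw [← hL, hvi, Nat.cast_add]; ring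
      subst hu; subst hw2
      exact ⟨(true, i, b), by
        simp only [Finset.coe_product, Set.mem_prod, Finset.mem_coe, Finset.mem_univ,
          true_and, mem_T]
        exact ⟨hi1, by omega, by omega⟩, rfl⟩
    · rw [Walk.length_copy, arcDown_length] at hlen
      have hLm : L ≤ m := by rw [hlen]; exact dist_le_half hm u w
      rw [Walk.support_copy, mem_arcDown_support] at hsup
      obtain ⟨i, hiL, hvi⟩ := hsup
      have hi1 : 1 ≤ i := by
        rcases Nat.eq_zero_or_pos i with rfl | h
        · exact absurd (by simpa using hvi) hvu
        · exact h
      have hiL' : i < L := by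
        rcases Nat.lt_or_ge i L with h | h
        · exact h
        · exfalso; apply hvw
          have : i = L := by omega
          subst this
          rw [hvi, hL]
      obtain ⟨b, rfl⟩ : ∃ b, L = i + b := ⟨L - i, by omega⟩
      have hu : v + (i : Fin n) = u := by rw [hvi]; ring
      have hw2 : v - (b : Fin n) = w := by rw [← hL, hvi, Nat.cast_add]; ring
      subst hu; subst hw2
      exact ⟨(false, i, b), by
        simp only [Finset.coe_product, Set.mem_prod, Finset.mem_coe, Finset.mem_univ,
          true_and, mem_T]
        exact ⟨hi1, by omega, by omega⟩, rfl⟩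
  · rintro x ⟨⟨s, a, b⟩, hx, rfl⟩
    simp only [Finset.coe_product, Set.mem_prod, Finset.mem_coe, Finset.mem_univ,
      true_and, mem_T] at hx
    obtain ⟨ha, hb, hab⟩ := hx
    have hm2 : 2 ≤ m := by omega
    cases s
    · -- down arc
      refine ⟨⟨?_, ?_⟩, ?_, ?_, ?_⟩ <;> dsimp only [F]
      · rw [Walk.isPath_copy]; exact arcDown_isPath _ (by omega)
      · rw [Walk.length_copy, arcDown_length]
        rw [SimpleGraph.dist_comm]
        exact (dist_eq_of_le_half hm _ _ (a+b) (by omega)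
          (by rw [Nat.cast_add]; ring)).symm
      · rw [Walk.support_copy, mem_arcDown_support]
        exact ⟨a, by omega, by ring⟩
      · intro h
        have h0 : (a : Fin n) = 0 := by linear_combination -h
        exact natCast_ne_zero ha (by omega) h0
      · intro h
        have h0 : (b : Fin n) = 0 := by linear_combination h
        exact natCast_ne_zero hb (by omega) h0
    · -- up arc
      refine ⟨⟨?_, ?_⟩, ?_, ?_, ?_⟩ <;> dsimp only [F]
      · rw [Walk.isPath_copy]; exact arc_isPath _ (by omega)
      · rw [Walk.length_copy, arc_length]
        exact (dist_eq_of_le_half hm _ _ (a+b) (by omega) (endpoint_up v a b)).symm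
      · rw [Walk.support_copy, mem_arc_support]
        exact ⟨a, by omega, by ring⟩
      · intro h
        have h0 : (a : Fin n) = 0 := by linear_combination h
        exact natCast_ne_zero ha (by omega) h0
      · intro h
        have h0 : (b : Fin n) = 0 := by linear_combination -h
        exact natCast_ne_zero hb (by omega) h0

lemma F_injOn {m : ℕ} (hm : (N + 2) = 2 * m) (v : Fin n) :
    Set.InjOn (F v) ↑((Finset.univ : Finset Bool) ×ˢ T m) := by
  rintro ⟨s, a, b⟩ hx ⟨s', a', b'⟩ hy hxy
  simp only [Finset.coe_product, Set.mem_prod, Finset.mem_coe, Finset.mem_univ,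
    true_and, mem_T] at hx hy
  obtain ⟨ha, hb, hab⟩ := hx
  obtain ⟨ha', hb', hab'⟩ := hy
  have e1 := congrArg (fun z => z.1) hxy
  have e2 := congrArg (fun z => z.2.1) hxy
  cases s <;> cases s' <;> simp only [F] at e1 e2
  · -- both down
    have f1 : (a : Fin n) = (a' : Fin n) := add_left_cancel e1
    have f2 : (b : Fin n) = (b' : Fin n) := by linear_combination -e2
    have h1 : a = a' := natCast_inj_of_lt (by omega) (by omega) f1
    have h2 : b = b' := natCast_inj_of_lt (by omega) (by omega) f2
    rw [h1, h2]
  · -- down / up : impossible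
    exfalso
    have h1 : ((a + a' : ℕ) : Fin n) = 0 := by rw [Nat.cast_add]; linear_combination e1
    have h2 : ((b + b' : ℕ) : Fin n) = 0 := by rw [Nat.cast_add]; linear_combination -e2
    have ha1 := eq_n_of_natCast_eq_zero h1 (by omega) (by omega)
    have hb1 := eq_n_of_natCast_eq_zero h2 (by omega) (by omega)
    omega
  · -- up / down : impossible
    exfalso
    have h1 : ((a + a' : ℕ) : Fin n) = 0 := by rw [Nat.cast_add]; linear_combination -e1
    have h2 : ((b + b' : ℕ) : Fin n) = 0 := by rw [Nat.cast_add]; linear_combination e2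
    have ha1 := eq_n_of_natCast_eq_zero h1 (by omega) (by omega)
    have hb1 := eq_n_of_natCast_eq_zero h2 (by omega) (by omega)
    omega
  · -- both up
    have f1 : (a : Fin n) = (a' : Fin n) := by linear_combination -e1
    have f2 : (b : Fin n) = (b' : Fin n) := add_left_cancel e2
    have h1 : a = a' := natCast_inj_of_lt (by omega) (by omega) f1
    have h2 : b = b' := natCast_inj_of_lt (by omega) (by omega) f2
    rw [h1, h2]

lemma ncard_eq {m : ℕ} (hm : (N + 2) = 2 * m) (v : Fin n) :
    {p : Σ u : Fin n, Σ w : Fin n, (cycleGraph n).Walk u w |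
      (cycleGraph n).IsGeodesic p.2.2 ∧ p.2.2.PassesThrough v}.ncard = 2 * (T m).card := by
  classical
  rw [geodesic_set_eq hm v, Set.ncard_image_of_injOn (F_injOn hm v),
    Set.ncard_coe_finset, Finset.card_product, Finset.card_univ]
  simp [two_mul]

end CycleAux

/-- For even `n ≥ 4`, every vertex of the cycle `C_n` has stress `n(n-2)/8`, and
the total stress of `C_n` is `n²(n-2)/8`. -/
theorem stress_cycleGraph_even (n : ℕ) (hn : 4 ≤ n) (heven : Even n) :
    (∀ v : Fin n, (SimpleGraph.cycleGraph n).stress v = n * (n - 2) / 8) ∧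
    ∑ v : Fin n, (SimpleGraph.cycleGraph n).stress v = n ^ 2 * (n - 2) / 8 := by
  obtain ⟨N, rfl⟩ : ∃ N, n = N + 2 := ⟨n - 2, by omega⟩
  obtain ⟨m, hm⟩ : ∃ m, N + 2 = 2 * m := by
    obtain ⟨k, hk⟩ := heven; exact ⟨k, by omega⟩
  have key : ∀ v : Fin (N + 2),
      (SimpleGraph.cycleGraph (N + 2)).stress v = (CycleAux.T m).card := by
    intro v
    unfold SimpleGraph.stress
    rw [CycleAux.ncard_eq hm v]
    omega
  have h8 : (N + 2) * (N + 2 - 2) = 8 * (CycleAux.T m).card := by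
    have e1 : N + 2 - 2 = 2 * (m - 1) := by omega
    calc (N + 2) * (N + 2 - 2) = (2 * m) * (2 * (m - 1)) := by rw [← hm, ← e1]
      _ = 4 * (m * (m - 1)) := by ring
      _ = 4 * ((CycleAux.T m).card * 2) := by rw [CycleAux.T_card]
      _ = 8 * (CycleAux.T m).card := by ring
  constructor
  · intro v
    rw [key v, h8]
    omega
  · have hsum : ∑ v : Fin (N + 2), (SimpleGraph.cycleGraph (N + 2)).stress v
        = (N + 2) * (CycleAux.T m).card := by
      rw [Finset.sum_congr rfl (fun v _ => key v), Finset.sum_const, Finset.card_univ,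
        Fintype.card_fin, smul_eq_mul]
    rw [hsum]
    have h9 : (N + 2) ^ 2 * (N + 2 - 2) = 8 * ((N + 2) * (CycleAux.T m).card) := by
      calc (N + 2) ^ 2 * (N + 2 - 2) = (N + 2) * ((N + 2) * (N + 2 - 2)) := by ring
        _ = (N + 2) * (8 * (CycleAux.T m).card) := by rw [h8]
        _ = 8 * ((N + 2) * (CycleAux.T m).card) := by ring
    rw [h9]
    exact (Nat.mul_div_cancel_left _ (by norm_num)).symm
end

section
/- Let G be a finite connected simple graph with at least 3 vertices. Then G has exactly one vertex of positive stress (all other vertices having zero stress) if and only if G has a unique cut-vertex and every block of G is a complete subgraph of G. -/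
namespace SimpleGraph

variable {V : Type*}

/-- In a connected graph, `v` is a cut-vertex if deleting it disconnects the graph. -/
def IsCutVertex (G : SimpleGraph V) (v : V) : Prop :=
  ¬ (G.induce {v}ᶜ).Connected

/-- A graph on a vertex set is nonseparable if it is connected and has no cut-vertex
of its own. -/
def NonseparableOn (G : SimpleGraph V) (B : Set V) : Prop :=
  (G.induce B).Connected ∧ ∀ x : B, ((G.induce B).induce {x}ᶜ).Preconnected

/-- `B` is (the vertex set of) a block of `G`: a maximal nonseparable subgraph. -/
def IsBlock (G : SimpleGraph V) (B : Set V) : Prop :=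
  G.NonseparableOn B ∧ ∀ C : Set V, B ⊆ C → G.NonseparableOn C → C = B

end SimpleGraph

section Lemmas
open SimpleGraph

/-- Lift a walk avoiding forbidden vertices to reachability in a smaller graph. -/
lemma reachable_lift {α β : Type*} {G : SimpleGraph α} (H : SimpleGraph β)
    (P : α → Prop) (f : ∀ a, P a → β)
    (hadj : ∀ a b (ha : P a) (hb : P b), G.Adj a b → H.Adj (f a ha) (f b hb)) :
    ∀ {x y : α} (p : G.Walk x y), (∀ z ∈ p.support, P z) →
      ∀ (hx : P x) (hy : P y), H.Reachable (f x hx) (f y hy) := by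
  intro x y p
  induction p with
  | nil => intro _ hx hy; rfl
  | @cons u m w h q ih =>
    intro hp hx hy
    have hm : P m := hp m (by simp)
    exact ((hadj u m hx hm h).reachable).trans
      (ih (fun z hz => hp z (by simp [hz])) hm hy)

/-- Project a walk in an induced subgraph down to the ambient graph. -/
lemma exists_walk_of_induce {α : Type*} {G : SimpleGraph α} {s : Set α} :
    ∀ {x y : s} (p : (G.induce s).Walk x y),
      ∃ q : G.Walk x.1 y.1, q.support = p.support.map Subtype.val := by
  intro x y p
  induction p with
  | nil => exact ⟨.nil, by simp⟩
  | @cons u m w h q ih =>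
    obtain ⟨q', hq'⟩ := ih
    exact ⟨.cons h q', by show _ :: _ = _ :: List.map Subtype.val q.support; rw [← hq']; rfl⟩

/-- An internal vertex of a geodesic has two distinct nonadjacent neighbours. -/
lemma nonsimp_of_geodesic {α : Type*} {H : SimpleGraph α} {u w : α} (p : H.Walk u w)
    (hpath : p.IsPath) (hlen : p.length = H.dist u w) {m : α}
    (hm : m ∈ p.support) (hmu : m ≠ u) (hmw : m ≠ w) :
    ∃ a b, H.Adj m a ∧ H.Adj m b ∧ a ≠ b ∧ ¬ H.Adj a b := by
  classical
  set q := p.takeUntil m hm with hq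
  set r := p.dropUntil m hm with hr
  have hspec : q.append r = p := p.take_spec hm
  have hqpath : q.IsPath := hpath.takeUntil hm
  have hrpath : r.IsPath := hpath.dropUntil hm
  obtain ⟨a, ha, t, hqrev⟩ := Walk.exists_eq_cons_of_ne hmu q.reverse
  obtain ⟨b, hb, s, hrcons⟩ := Walk.exists_eq_cons_of_ne hmw r
  have hqlen : q.length = t.length + 1 := by
    have := congrArg Walk.length hqrev
    simpa [Walk.length_reverse] using this
  have hrlen : r.length = s.length + 1 := by simp [hrcons]
  have hplen : p.length = q.length + r.length := by
    rw [← hspec, Walk.length_append]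
  -- a ∈ q.support, b ∈ r.support.tail, and p.support = q.support ++ r.support.tail
  have hasup : a ∈ q.support := by
    have : a ∈ q.reverse.support := by rw [hqrev]; simp
    simpa [Walk.support_reverse] using this
  have hbsup : b ∈ r.support.tail := by
    rw [hrcons]; simp
  have hsupp : p.support = q.support ++ r.support.tail := by
    rw [← hspec, Walk.support_append]
  have hnodup : p.support.Nodup := hpath.support_nodup
  have hab : a ≠ b := by
    rintro rfl
    rw [hsupp] at hnodup
    exact (List.disjoint_of_nodup_append hnodup) hasup hbsup
  refine ⟨a, b, ha, hb, hab, fun hadj => ?_⟩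
  let W : H.Walk u w := (t.reverse).append (Walk.cons hadj s)
  have hWlen : W.length = t.length + s.length + 1 := by
    simp [W, Walk.length_append, Walk.length_reverse]; omega
  have hd : H.dist u w ≤ W.length := H.dist_le W
  rw [← hlen, hplen, hqlen, hrlen, hWlen] at hd
  omega

lemma walk_sigma_eq_of_support_eq {α : Type*} {G : SimpleGraph α} :
    ∀ {u w : α} (p : G.Walk u w) {u' w' : α} (q : G.Walk u' w'), p.support = q.support →
      (⟨u, w, p⟩ : Σ x : α, Σ y : α, G.Walk x y) = ⟨u', w', q⟩ := by
  intro u w p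
  induction p with
  | nil =>
    intro u' w' q hq
    cases q with
    | nil => simp only [Walk.support_nil] at hq; injection hq with h1 _; subst h1; rfl
    | cons h' q' =>
      simp only [Walk.support_nil, Walk.support_cons] at hq
      injection hq with h1 h2
      exact absurd h2.symm (Walk.support_ne_nil q')
  | @cons u m w h p' ih =>
    intro u' w' q hq
    cases q with
    | nil =>
      simp only [Walk.support_nil, Walk.support_cons] at hq
      injection hq with h1 h2
      exact absurd h2 (Walk.support_ne_nil p')
    | @cons u' m' w' h' q' =>
      simp only [Walk.support_cons] at hq
      injection hq with h1 h2
      subst h1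
      have := ih q' h2
      injection this with h3 h4
      subst h3
      rw [heq_eq_eq] at h4
      injection h4 with h5 h6
      subst h5
      rw [heq_eq_eq] at h6
      subst h6
      rfl

section Stress
variable {V : Type*} [Fintype V] {G : SimpleGraph V}

lemma geodesics_finite (v : V) :
    {p : Σ u : V, Σ w : V, G.Walk u w |
      G.IsGeodesic p.2.2 ∧ p.2.2.PassesThrough v}.Finite := by
  classical
  apply Set.Finite.of_finite_image (f := fun p => p.2.2.support)
  · apply Set.Finite.subset (s := {l : List V | l.Nodup})
    · have : Finite {l : List V // l.Nodup} := inferInstance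
      exact Set.finite_coe_iff.mp this
    · rintro l ⟨p, ⟨⟨hp, _⟩, _⟩, rfl⟩
      exact hp.support_nodup
  · rintro p hp q hq h
    obtain ⟨u, w, p⟩ := p
    obtain ⟨u', w', q⟩ := q
    exact walk_sigma_eq_of_support_eq p q h

lemma stress_pos_iff (v : V) :
    0 < G.stress v ↔ ∃ a b, G.Adj v a ∧ G.Adj v b ∧ a ≠ b ∧ ¬ G.Adj a b := by
  classical
  constructor
  · intro h
    have hne : {p : Σ u : V, Σ w : V, G.Walk u w |
        G.IsGeodesic p.2.2 ∧ p.2.2.PassesThrough v}.Nonempty := by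
      by_contra hc
      rw [Set.not_nonempty_iff_eq_empty] at hc
      simp [stress, hc] at h
    obtain ⟨⟨u, w, p⟩, ⟨hp, hlen⟩, hmem, hmu, hmw⟩ := hne
    obtain ⟨a, b, ha, hb, hab, hnadj⟩ := nonsimp_of_geodesic p hp hlen hmem hmu hmw
    exact ⟨a, b, ha, hb, hab, hnadj⟩
  · rintro ⟨a, b, ha, hb, hab, hnadj⟩
    have hd : G.dist a b = 2 := by
      have h1 : G.dist a b ≤ 2 := by
        have := G.dist_le (Walk.cons ha.symm (Walk.cons hb .nil))
        simpa using this
      have h2 : G.dist a b ≠ 0 := by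
        rw [dist_ne_zero_iff_ne_and_reachable]
        exact ⟨hab, (Walk.cons ha.symm (Walk.cons hb .nil)).reachable⟩
      have h3 : G.dist a b ≠ 1 := fun hc => hnadj (dist_eq_one_iff_adj.mp hc)
      omega
    let p : G.Walk a b := Walk.cons ha.symm (Walk.cons hb .nil)
    have hpath : p.IsPath := by
      rw [Walk.isPath_def]
      simp [p, ha.ne', hab, hb.ne]
    have hgeo : G.IsGeodesic p ∧ p.PassesThrough v := by
      refine ⟨⟨hpath, by simp [p, hd]⟩, by simp [p], ha.ne, hb.ne⟩
    have hgeo' : G.IsGeodesic p.reverse ∧ p.reverse.PassesThrough v := by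
      refine ⟨⟨hpath.reverse, by simp [p, Walk.length_reverse, hd, G.dist_comm]⟩,
        by simp [Walk.support_reverse, p], hb.ne, ha.ne⟩
    have hsub : {(⟨a, b, p⟩ : Σ u : V, Σ w : V, G.Walk u w), ⟨b, a, p.reverse⟩} ⊆
        {p : Σ u : V, Σ w : V, G.Walk u w |
          G.IsGeodesic p.2.2 ∧ p.2.2.PassesThrough v} := by
      rintro x (rfl | rfl)
      · exact hgeo
      · exact hgeo'
    have hcard : 2 ≤ {p : Σ u : V, Σ w : V, G.Walk u w |
        G.IsGeodesic p.2.2 ∧ p.2.2.PassesThrough v}.ncard := by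
      have h2 : ({(⟨a, b, p⟩ : Σ u : V, Σ w : V, G.Walk u w), ⟨b, a, p.reverse⟩} :
          Set _).ncard = 2 := by
        rw [Set.ncard_pair]
        intro hc
        injection hc with h1 _
        exact hab h1
      rw [← h2]
      exact Set.ncard_le_ncard hsub (geodesics_finite v)
    exact Nat.div_pos hcard (by norm_num)

end Stress

lemma nonsimp_of_cut {V : Type*} [Fintype V] {G : SimpleGraph V} (hG : G.Connected)
    (h3 : 3 ≤ Fintype.card V) {c : V} (hc : G.IsCutVertex c) :
    ∃ a b, G.Adj c a ∧ G.Adj c b ∧ a ≠ b ∧ ¬ G.Adj a b := by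
  classical
  have hne : Nonempty ↑({c}ᶜ : Set V) := by
    obtain ⟨x, hx⟩ := Fintype.exists_ne_of_one_lt_card (by omega) c
    exact ⟨⟨x, hx⟩⟩
  rw [IsCutVertex, connected_iff] at hc
  push_neg at hc
  have hpre : ¬ (G.induce ({c}ᶜ : Set V)).Preconnected := fun hp => not_isEmpty_of_nonempty _ (hc hp)
  rw [Preconnected] at hpre
  push_neg at hpre
  obtain ⟨x, y, hxy⟩ := hpre
  obtain ⟨p0⟩ := hG.preconnected x.1 y.1
  let q : G.Walk x.1 y.1 := p0.toPath.1
  have hqpath : q.IsPath := p0.toPath.2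
  have hmemP : ∀ {z : V}, z ≠ c → z ∈ ({c}ᶜ : Set V) := by
    intro z hz; simp [hz]
  have hlift : ∀ {u w : V} (r : G.Walk u w), c ∉ r.support →
      ∀ (hu : u ∈ ({c}ᶜ : Set V)) (hw : w ∈ ({c}ᶜ : Set V)),
      (G.induce ({c}ᶜ : Set V)).Reachable ⟨u, hu⟩ ⟨w, hw⟩ := by
    intro u w r hr hu hw
    exact reachable_lift (G.induce ({c}ᶜ : Set V)) (· ∈ ({c}ᶜ : Set V))
      (fun z hz => ⟨z, hz⟩) (fun a b ha hb hab => hab) r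
      (fun z hz => by
        simp only [Set.mem_compl_iff, Set.mem_singleton_iff]
        rintro rfl; exact hr hz) hu hw
  have hcq : c ∈ q.support := by
    by_contra hns
    exact hxy (hlift q hns x.2 y.2)
  have hcx : c ≠ x.1 := fun h => x.2 (by simp [← h])
  have hcy : c ≠ y.1 := fun h => y.2 (by simp [← h])
  set qt := q.takeUntil c hcq with hqt
  set qd := q.dropUntil c hcq with hqd
  have hqtpath : qt.IsPath := hqpath.takeUntil hcq
  have hqdpath : qd.IsPath := hqpath.dropUntil hcq
  obtain ⟨a, ha, t, hqrev⟩ := Walk.exists_eq_cons_of_ne hcx qt.reverse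
  obtain ⟨b, hb, s, hqcons⟩ := Walk.exists_eq_cons_of_ne hcy qd
  have hasup : a ∈ qt.support := by
    have : a ∈ qt.reverse.support := by rw [hqrev]; simp
    simpa [Walk.support_reverse] using this
  have hbsup : b ∈ qd.support.tail := by rw [hqcons]; simp
  have hsupp : q.support = qt.support ++ qd.support.tail := by
    rw [← q.take_spec hcq, Walk.support_append]
  have hnodup : q.support.Nodup := hqpath.support_nodup
  have hab : a ≠ b := by
    rintro rfl
    rw [hsupp] at hnodup
    exact (List.disjoint_of_nodup_append hnodup) hasup hbsup
  have hct : c ∉ t.support := by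
    have h1 : (Walk.cons ha t).support.Nodup := by
      rw [← hqrev]; exact hqtpath.reverse.support_nodup
    simp only [Walk.support_cons, List.nodup_cons] at h1
    exact h1.1
  have hcs : c ∉ s.support := by
    have h1 : (Walk.cons hb s).support.Nodup := by
      rw [← hqcons]; exact hqdpath.support_nodup
    simp only [Walk.support_cons, List.nodup_cons] at h1
    exact h1.1
  refine ⟨a, b, ha, hb, hab, fun hadj => ?_⟩
  have r1 : (G.induce ({c}ᶜ : Set V)).Reachable x ⟨a, hmemP ha.ne'⟩ := by
    have := hlift t.reverse (by simpa [Walk.support_reverse] using hct) x.2 (hmemP ha.ne')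
    exact this
  have r2 : (G.induce ({c}ᶜ : Set V)).Reachable ⟨b, hmemP hb.ne'⟩ y := by
    exact hlift s hcs (hmemP hb.ne') y.2
  have radj : (G.induce ({c}ᶜ : Set V)).Adj ⟨a, hmemP ha.ne'⟩ ⟨b, hmemP hb.ne'⟩ := hadj
  exact hxy ((r1.trans radj.reachable).trans r2)
lemma exists_block_of_not_cut {V : Type*} [Fintype V] {G : SimpleGraph V} {w a b : V}
    (hw : ¬ G.IsCutVertex w) (ha : G.Adj w a) (hb : G.Adj w b) (hab : a ≠ b) :
    ∃ B : Set V, G.IsBlock B ∧ a ∈ B ∧ b ∈ B := by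
  classical
  have hconn : (G.induce ({w}ᶜ : Set V)).Connected := not_not.mp hw
  have haw : a ∈ ({w}ᶜ : Set V) := by simp [ha.ne']
  have hbw : b ∈ ({w}ᶜ : Set V) := by simp [hb.ne']
  obtain ⟨p0⟩ := hconn.preconnected ⟨a, haw⟩ ⟨b, hbw⟩
  obtain ⟨q0, hq0⟩ := exists_walk_of_induce p0
  have hwq0 : w ∉ q0.support := by
    rw [hq0]
    intro hmem
    obtain ⟨z, _, hz2⟩ := List.mem_map.mp hmem
    exact z.2 (by simp [hz2])
  let q : G.Walk a b := q0.toPath.1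
  have hqpath : q.IsPath := q0.toPath.2
  have hwq : w ∉ q.support := fun h => hwq0 (Walk.support_toPath_subset q0 h)
  set S : Set V := insert w {z | z ∈ q.support} with hS
  have hwS : w ∈ S := Set.mem_insert _ _
  have hsub : ∀ z ∈ q.support, z ∈ S := fun z hz => Set.mem_insert_iff.mpr (Or.inr hz)
  have haS : a ∈ S := hsub a q.start_mem_support
  have hbS : b ∈ S := hsub b q.end_mem_support
  -- S is nonseparable
  have hnonsep : G.NonseparableOn S := by
    constructor
    · -- connected
      rw [connected_iff]
      refine ⟨?_, ⟨⟨w, hwS⟩⟩⟩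
      have key : ∀ z : ↑S, (G.induce S).Reachable z ⟨w, hwS⟩ := by
        rintro ⟨z, hz⟩
        rcases Set.mem_insert_iff.mp hz with h | hzs
        · subst h; rfl
        · have r1 : (G.induce S).Reachable ⟨z, hz⟩ ⟨a, haS⟩ := by
            refine reachable_lift (G.induce S) (· ∈ S) (fun z hz => ⟨z, hz⟩)
              (fun a b _ _ hab => hab) (q.takeUntil z hzs).reverse
              (fun u hu => hsub u ?_) hz haS
            rw [Walk.support_reverse, List.mem_reverse] at hu
            exact q.support_takeUntil_subset hzs hu
          exact r1.trans (Adj.reachable (show (G.induce S).Adj ⟨a, haS⟩ ⟨w, hwS⟩ from ha.symm))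
      intro z1 z2
      exact (key z1).trans (key z2).symm
    · -- no cut vertex
      rintro ⟨t, ht⟩
      set x : ↑S := ⟨t, ht⟩ with hx
      have hmemx : ∀ {z : V} (hzS : z ∈ S), z ≠ t → (⟨z, hzS⟩ : ↑S) ∈ ({x}ᶜ : Set ↑S) := by
        intro z hzS hzt
        simp only [Set.mem_compl_iff, Set.mem_singleton_iff, hx]
        exact fun hc => hzt (congrArg Subtype.val hc)
      have hlift2 : ∀ {u v' : V} (r : G.Walk u v'), (∀ z ∈ r.support, z ∈ S ∧ z ≠ t) →
          ∀ (hu : u ∈ S ∧ u ≠ t) (hv : v' ∈ S ∧ v' ≠ t),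
          ((G.induce S).induce ({x}ᶜ : Set ↑S)).Reachable
            ⟨⟨u, hu.1⟩, hmemx hu.1 hu.2⟩ ⟨⟨v', hv.1⟩, hmemx hv.1 hv.2⟩ := by
        intro u v' r hr hu hv
        exact reachable_lift ((G.induce S).induce ({x}ᶜ : Set ↑S))
          (fun z => z ∈ S ∧ z ≠ t) (fun z hz => ⟨⟨z, hz.1⟩, hmemx hz.1 hz.2⟩)
          (fun a b _ _ hab => hab) r hr hu hv
      rcases Set.mem_insert_iff.mp ht with htw | hts
      · -- t = w : the path q survives
        have key : ∀ z : ↑({x}ᶜ : Set ↑S), ((G.induce S).induce ({x}ᶜ : Set ↑S)).Reachable z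
            ⟨⟨a, haS⟩, hmemx haS (htw ▸ ha.ne')⟩ := by
          rintro ⟨⟨z, hzS⟩, hzx⟩
          have hzt : z ≠ t := by
            intro hc
            apply hzx
            simp only [Set.mem_singleton_iff, hx]
            exact Subtype.ext hc
          have hzs : z ∈ q.support := by
            rcases Set.mem_insert_iff.mp hzS with h | h
            · exact absurd (h.trans htw.symm) hzt
            · exact h
          have := hlift2 (q.takeUntil z hzs).reverse
            (fun u hu => by
              rw [Walk.support_reverse, List.mem_reverse] at hu
              have hu' := q.support_takeUntil_subset hzs hu
              exact ⟨hsub u hu', fun hc => hwq (by rwa [hc, htw] at hu')⟩)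
            ⟨hzS, hzt⟩ ⟨haS, htw ▸ ha.ne'⟩
          exact this
        intro z1 z2
        exact (key z1).trans (key z2).symm
      · -- t ∈ q.support, so t ≠ w; hub is w
        have htw : w ≠ t := fun hc => hwq (hc ▸ hts)
        have key : ∀ z : ↑({x}ᶜ : Set ↑S), ((G.induce S).induce ({x}ᶜ : Set ↑S)).Reachable z
            ⟨⟨w, hwS⟩, hmemx hwS htw⟩ := by
          rintro ⟨⟨z, hzS⟩, hzx⟩
          have hzt : z ≠ t := by
            intro hc
            apply hzx
            simp only [Set.mem_singleton_iff, hx]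
            exact Subtype.ext hc
          rcases Set.mem_insert_iff.mp hzS with h | hzs
          · subst h
            exact Reachable.refl _
          · -- z on the path
            have hdisj : t ∉ (q.takeUntil z hzs).support ∨ t ∉ (q.dropUntil z hzs).support := by
              by_contra hcon
              push_neg at hcon
              obtain ⟨h1, h2⟩ := hcon
              have hsupp := congrArg Walk.support (q.take_spec hzs)
              rw [Walk.support_append] at hsupp
              have hnodup := hqpath.support_nodup
              rw [← hsupp] at hnodup
              have hdis := List.disjoint_of_nodup_append hnodup
              have h2' : t ∈ z :: (q.dropUntil z hzs).support.tail :=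
                (q.dropUntil z hzs).support_eq_cons ▸ h2
              rcases List.mem_cons.mp h2' with h3 | h3
              · exact hzt h3.symm
              · exact hdis h1 h3
            rcases hdisj with h1 | h2
            · -- go to a, then to w
              have hat : a ≠ t := fun hc => h1 (hc ▸ (q.takeUntil z hzs).start_mem_support)
              have r1 := hlift2 (q.takeUntil z hzs).reverse
                (fun u hu => by
                  rw [Walk.support_reverse, List.mem_reverse] at hu
                  exact ⟨hsub u (q.support_takeUntil_subset hzs hu),
                    fun hc => h1 (hc ▸ hu)⟩)
                ⟨hzS, hzt⟩ ⟨haS, hat⟩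
              refine r1.trans (Adj.reachable ?_)
              exact show G.Adj a w from ha.symm
            · -- go to b, then to w
              have hbt : b ≠ t := fun hc => h2 (hc ▸ (q.dropUntil z hzs).end_mem_support)
              have r1 := hlift2 (q.dropUntil z hzs)
                (fun u hu => ⟨hsub u (q.support_dropUntil_subset hzs hu),
                  fun hc => h2 (hc ▸ hu)⟩)
                ⟨hzS, hzt⟩ ⟨hbS, hbt⟩
              refine r1.trans (Adj.reachable ?_)
              exact show G.Adj b w from hb.symm
        intro z1 z2
        exact (key z1).trans (key z2).symm
  -- extend S to a maximal nonseparable set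
  obtain ⟨B, hB, hBmax⟩ := Set.Finite.exists_maximalFor (id : Set V → Set V)
    {C : Set V | S ⊆ C ∧ G.NonseparableOn C} (Set.toFinite _)
    ⟨S, subset_rfl, hnonsep⟩
  refine ⟨B, ⟨hB.2, fun C hBC hC => ?_⟩, hB.1 haS, hB.1 hbS⟩
  exact Set.Subset.antisymm (hBmax ⟨hB.1.trans hBC, hC⟩ hBC) hBC
/-- In a nonseparable set containing two nonadjacent vertices there are two distinct
vertices each having a pair of distinct nonadjacent neighbours. -/
lemma two_nonsimp {V : Type*} {G : SimpleGraph V} {B : Set V} (hB : G.NonseparableOn B) {x y : V} (hx : x ∈ B) (hy : y ∈ B)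
    (hxy : x ≠ y) (hnadj : ¬ G.Adj x y) :
    ∃ m1 m2 : V, m1 ≠ m2 ∧ (∃ a b, G.Adj m1 a ∧ G.Adj m1 b ∧ a ≠ b ∧ ¬ G.Adj a b)
      ∧ (∃ a b, G.Adj m2 a ∧ G.Adj m2 b ∧ a ≠ b ∧ ¬ G.Adj a b) := by
  classical
  set H := G.induce B with hH
  set x' : ↑B := ⟨x, hx⟩ with hx'
  set y' : ↑B := ⟨y, hy⟩ with hy'
  have hxy' : x' ≠ y' := fun h => hxy (congrArg Subtype.val h)
  have hnadj' : ¬ H.Adj x' y' := hnadj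
  -- first geodesic, in H
  have hd : 2 ≤ H.dist x' y' := by
    have h0 : H.dist x' y' ≠ 0 := by
      rw [dist_ne_zero_iff_ne_and_reachable]
      exact ⟨hxy', hB.1.preconnected x' y'⟩
    have h1 : H.dist x' y' ≠ 1 := fun hc => hnadj' (dist_eq_one_iff_adj.mp hc)
    omega
  obtain ⟨p, hpath, hlen⟩ := hB.1.exists_path_of_dist x' y'
  obtain ⟨m, hxm, prest, hpcons⟩ := Walk.exists_eq_cons_of_ne hxy' p
  have hmsup : m ∈ p.support := by rw [hpcons]; simp
  have hmx : m ≠ x' := hxm.ne'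
  have hmy : m ≠ y' := fun hc => hnadj' (hc ▸ hxm)
  obtain ⟨a, b, hma, hmb, hab, hnab⟩ := nonsimp_of_geodesic p hpath hlen hmsup hmx hmy
  have ns1 : ∃ a b, G.Adj m.1 a ∧ G.Adj m.1 b ∧ a ≠ b ∧ ¬ G.Adj a b :=
    ⟨a.1, b.1, hma, hmb, fun h => hab (Subtype.ext h), hnab⟩
  -- second geodesic, in H minus m
  set H' := H.induce ({m}ᶜ : Set ↑B) with hH'
  have hxm' : x' ∈ ({m}ᶜ : Set ↑B) := fun hc => hmx (Set.mem_singleton_iff.mp hc).symm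
  have hym' : y' ∈ ({m}ᶜ : Set ↑B) := fun hc => hmy (Set.mem_singleton_iff.mp hc).symm
  set x'' : ↑({m}ᶜ : Set ↑B) := ⟨x', hxm'⟩ with hx''
  set y'' : ↑({m}ᶜ : Set ↑B) := ⟨y', hym'⟩ with hy''
  have hxy'' : x'' ≠ y'' := fun h => hxy' (congrArg Subtype.val h)
  have hnadj'' : ¬ H'.Adj x'' y'' := hnadj
  have hreach : H'.Reachable x'' y'' := hB.2 m x'' y''
  have hd2 : 2 ≤ H'.dist x'' y'' := by
    have h0 : H'.dist x'' y'' ≠ 0 := by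
      rw [dist_ne_zero_iff_ne_and_reachable]
      exact ⟨hxy'', hreach⟩
    have h1 : H'.dist x'' y'' ≠ 1 := fun hc => hnadj'' (dist_eq_one_iff_adj.mp hc)
    omega
  obtain ⟨p', hpath', hlen'⟩ := hreach.exists_path_of_dist
  obtain ⟨m2, hxm2, prest', hpcons'⟩ := Walk.exists_eq_cons_of_ne hxy'' p'
  have hmsup' : m2 ∈ p'.support := by rw [hpcons']; simp
  have hmx2 : m2 ≠ x'' := hxm2.ne'
  have hmy2 : m2 ≠ y'' := fun hc => hnadj'' (hc ▸ hxm2)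
  obtain ⟨a', b', hma', hmb', hab', hnab'⟩ :=
    nonsimp_of_geodesic p' hpath' hlen' hmsup' hmx2 hmy2
  have ns2 : ∃ a b, G.Adj m2.1.1 a ∧ G.Adj m2.1.1 b ∧ a ≠ b ∧ ¬ G.Adj a b :=
    ⟨a'.1.1, b'.1.1, hma', hmb', fun h => hab' (Subtype.ext (Subtype.ext h)), hnab'⟩
  refine ⟨m.1, m2.1.1, ?_, ns1, ns2⟩
  intro hc
  exact m2.2 (Set.mem_singleton_iff.mpr (Subtype.ext hc.symm))
end Lemmas

/-- A finite connected simple graph with at least 3 vertices has exactly one vertex of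
positive stress (all the others having zero stress) iff it has a unique cut-vertex and
all of its blocks are complete subgraphs. -/
theorem unique_positive_stress_iff {V : Type*} [Fintype V] (G : SimpleGraph V)
    (hG : G.Connected) (h3 : 3 ≤ Fintype.card V) :
    (∃ v : V, 0 < G.stress v ∧ ∀ w : V, w ≠ v → G.stress w = 0) ↔
      ((∃! v : V, G.IsCutVertex v) ∧
        ∀ B : Set V, G.IsBlock B → ∀ x ∈ B, ∀ y ∈ B, x ≠ y → G.Adj x y) := by
  classical
  have hchar : ∀ z : V, 0 < G.stress z ↔
      ∃ a b, G.Adj z a ∧ G.Adj z b ∧ a ≠ b ∧ ¬ G.Adj a b := fun z => stress_pos_iff z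
  constructor
  · rintro ⟨v, hv, hothers⟩
    have hvns := (hchar v).mp hv
    have hns : ∀ w : V, w ≠ v → ¬ ∃ a b, G.Adj w a ∧ G.Adj w b ∧ a ≠ b ∧ ¬ G.Adj a b := by
      intro w hw hcon
      have h1 := (hchar w).mpr hcon
      rw [hothers w hw] at h1
      exact lt_irrefl 0 h1
    have hblocks : ∀ B : Set V, G.IsBlock B → ∀ x ∈ B, ∀ y ∈ B, x ≠ y → G.Adj x y := by
      intro B hBl x hx y hy hxy
      by_contra hnadj
      obtain ⟨m1, m2, hm12, h1, h2⟩ := two_nonsimp hBl.1 hx hy hxy hnadj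
      by_cases hm1 : m1 = v
      · exact hns m2 (fun hc => hm12 (hm1.trans hc.symm)) h2
      · exact hns m1 hm1 h1
    have hvcut : G.IsCutVertex v := by
      by_contra hvc
      obtain ⟨a, b, ha, hb, hab, hnab⟩ := hvns
      obtain ⟨B, hB, haB, hbB⟩ := exists_block_of_not_cut hvc ha hb hab
      exact hnab (hblocks B hB a haB b hbB hab)
    refine ⟨⟨v, hvcut, ?_⟩, hblocks⟩
    intro c hc
    by_contra hcv
    exact hns c hcv (nonsimp_of_cut hG h3 hc)
  · rintro ⟨⟨v, hvcut, huniq⟩, hcomp⟩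
    refine ⟨v, (hchar v).mpr (nonsimp_of_cut hG h3 hvcut), ?_⟩
    intro w hw
    by_contra h0
    have hpos : 0 < G.stress w := Nat.pos_of_ne_zero h0
    obtain ⟨a, b, ha, hb, hab, hnab⟩ := (hchar w).mp hpos
    have hwcut : ¬ G.IsCutVertex w := fun hc => hw (huniq w hc)
    obtain ⟨B, hB, haB, hbB⟩ := exists_block_of_not_cut hwcut ha hb hab
    exact hnab (hcomp B hB a haB b hbB hab)
end

section
/- Let G be a finite connected simple graph with n+1 vertices, where n ≥ 2. Then G is isomorphic to the star K_{1,n} if and only if G has exactly one vertex of stress n(n-1)/2 and every other vertex of G has stress zero. -/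
namespace SimpleGraph

variable {V : Type*} {G : SimpleGraph V}

lemma aux_geodesics_finite [Fintype V] (P : (Σ u : V, Σ w : V, G.Walk u w) → Prop)
    (hP : ∀ p, P p → p.2.2.IsPath) :
    {p : Σ u : V, Σ w : V, G.Walk u w | P p}.Finite := by
  classical
  haveI : G.LocallyFinite := fun v => Fintype.ofFinite _
  have hsub : {p : Σ u : V, Σ w : V, G.Walk u w | P p} ⊆
      ⋃ u : V, ⋃ w : V, (fun q : G.Walk u w => (⟨u, w, q⟩ : Σ u : V, Σ w : V, G.Walk u w)) ''
        {q : G.Walk u w | q.IsPath ∧ q.length < Fintype.card V} := by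
    rintro ⟨u, w, q⟩ hq
    simp only [Set.mem_iUnion, Set.mem_image]
    exact ⟨u, w, q, ⟨hP _ hq, (hP _ hq).length_lt⟩, rfl⟩
  exact Set.Finite.subset (Set.finite_iUnion fun u => Set.finite_iUnion fun w =>
    (Set.toFinite _).image _) hsub

lemma aux_two_le_length {u w v : V} {p : G.Walk u w} (h : p.PassesThrough v) :
    2 ≤ p.length := by
  obtain ⟨hmem, hvu, hvw⟩ := h
  cases p with
  | nil => simp at hmem; exact absurd hmem hvu
  | cons h q =>
    cases q with
    | nil =>
      simp [Walk.support_cons] at hmem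
      rcases hmem with h1 | h1
      · exact absurd h1 hvu
      · exact absurd h1 hvw
    | cons h2 r => simp [Walk.length_cons]

lemma aux_stress_pos [Fintype V] {u w v : V} {p : G.Walk u w}
    (hg : G.IsGeodesic p) (hpt : p.PassesThrough v) : 1 ≤ G.stress v := by
  have hlen : 2 ≤ p.length := aux_two_le_length hpt
  have huw : u ≠ w := by
    rintro rfl
    have := hg.2
    rw [dist_self] at this
    omega
  have hfin : {q : Σ u : V, Σ w : V, G.Walk u w |
      G.IsGeodesic q.2.2 ∧ q.2.2.PassesThrough v}.Finite :=
    aux_geodesics_finite _ (fun q hq => hq.1.1)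
  have h1 : (⟨u, w, p⟩ : Σ u : V, Σ w : V, G.Walk u w) ∈
      {q : Σ u : V, Σ w : V, G.Walk u w | G.IsGeodesic q.2.2 ∧ q.2.2.PassesThrough v} :=
    ⟨hg, hpt⟩
  have h2 : (⟨w, u, p.reverse⟩ : Σ u : V, Σ w : V, G.Walk u w) ∈
      {q : Σ u : V, Σ w : V, G.Walk u w | G.IsGeodesic q.2.2 ∧ q.2.2.PassesThrough v} := by
    refine ⟨⟨hg.1.reverse, ?_⟩, ?_⟩
    · rw [Walk.length_reverse, hg.2, dist_comm]
    · exact ⟨by rw [Walk.support_reverse]; simpa using hpt.1, hpt.2.2, hpt.2.1⟩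
  have hne : (⟨u, w, p⟩ : Σ u : V, Σ w : V, G.Walk u w) ≠ ⟨w, u, p.reverse⟩ := by
    intro h
    exact huw (congrArg Sigma.fst h)
  have : 1 < {q : Σ u : V, Σ w : V, G.Walk u w |
      G.IsGeodesic q.2.2 ∧ q.2.2.PassesThrough v}.ncard :=
    (Set.one_lt_ncard hfin).mpr ⟨_, h1, _, h2, hne⟩
  rw [stress]
  omega

lemma aux_two_neighbors {u w x : V} (p : G.Walk u w) (hp : p.IsPath)
    (hx : x ∈ p.support) (hxu : x ≠ u) (hxw : x ≠ w) :
    ∃ a b, a ≠ b ∧ G.Adj x a ∧ G.Adj x b := by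
  induction p with
  | nil =>
    simp only [Walk.support_nil, List.mem_singleton] at hx
    exact absurd hx hxu
  | @cons u y w h q ih =>
    rw [Walk.support_cons, List.mem_cons] at hx
    rcases hx with rfl | hx
    · exact absurd rfl hxu
    by_cases hxy : x = y
    · subst hxy
      cases q with
      | nil => exact absurd rfl hxw
      | @cons _ z _ h2 r =>
        refine ⟨u, z, ?_, h.symm, h2⟩
        intro huz
        have hu : u ∉ (Walk.cons h2 r).support := (Walk.cons_isPath_iff _ _).mp hp |>.2
        rw [huz] at hu
        exact hu (by rw [Walk.support_cons]; exact List.mem_cons_of_mem _ r.start_mem_support)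
    · exact ih (hp.of_cons) hx hxy hxw

lemma aux_stress_zero {x v : V} (h : ∀ a, G.Adj x a → a = v) :
    G.stress x = 0 := by
  have hempty : {p : Σ u : V, Σ w : V, G.Walk u w |
      G.IsGeodesic p.2.2 ∧ p.2.2.PassesThrough x} = ∅ := by
    ext ⟨u, w, p⟩
    simp only [Set.mem_setOf_eq, Set.mem_empty_iff_false, iff_false]
    rintro ⟨⟨hp, -⟩, hmem, hxu, hxw⟩
    obtain ⟨a, b, hab, ha, hb⟩ := aux_two_neighbors p hp hmem hxu hxw
    exact hab ((h a ha).trans (h b hb).symm)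
  rw [stress, hempty, Set.ncard_empty]

/-- Canonical form of a geodesic passing through `v`, when every internal vertex of every
geodesic equals `v`. -/
lemma aux_canonical {v : V}
    (hint : ∀ ⦃u w : V⦄ (p : G.Walk u w), G.IsGeodesic p → ∀ x, p.PassesThrough x → x = v)
    {u w : V} {p : G.Walk u w} (hg : G.IsGeodesic p) (hpt : p.PassesThrough v) :
    ∃ (h1 : G.Adj u v) (h2 : G.Adj v w), p = Walk.cons h1 (Walk.cons h2 Walk.nil) := by
  have hl := aux_two_le_length hpt
  cases p with
  | nil => simp at hl
  | @cons u y w h q =>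
    cases q with
    | nil => simp at hl
    | @cons y z w h2 r =>
      cases r with
      | nil =>
        have hy : y = v := by
          refine hint _ hg y ⟨?_, h.ne', h2.ne⟩
          simp [Walk.support_cons]
        subst hy
        exact ⟨h, h2, rfl⟩
      | @cons z t w h3 s =>
        exfalso
        have hp : (Walk.cons h (Walk.cons h2 (Walk.cons h3 s))).IsPath := hg.1
        have hyw : y ≠ w := by
          rintro rfl
          have h5 := hp.of_cons
          rw [Walk.isPath_iff_eq_nil] at h5
          simp at h5
        have hzw : z ≠ w := by
          rintro rfl
          have h5 := hp.of_cons.of_cons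
          rw [Walk.isPath_iff_eq_nil] at h5
          simp at h5
        have hzu : z ≠ u := by
          rintro rfl
          have hu := ((Walk.cons_isPath_iff _ _).mp hp).2
          exact hu (by simp [Walk.support_cons])
        have hy : y = v := hint _ hg y ⟨by simp [Walk.support_cons], h.ne', hyw⟩
        have hz : z = v := hint _ hg z ⟨by simp [Walk.support_cons], hzu, hzw⟩
        exact h2.ne (hy.trans hz.symm)

lemma aux_stress_eq {v : V}
    (hadj : ∀ u, u ≠ v → G.Adj v u)
    (hint : ∀ ⦃u w : V⦄ (p : G.Walk u w), G.IsGeodesic p → ∀ x, p.PassesThrough x → x = v) :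
    G.stress v = {q : V × V | q.1 ≠ q.2 ∧ q.1 ≠ v ∧ q.2 ≠ v ∧ ¬ G.Adj q.1 q.2}.ncard / 2 := by
  set S := {p : Σ u : V, Σ w : V, G.Walk u w | G.IsGeodesic p.2.2 ∧ p.2.2.PassesThrough v}
    with hS
  set T := {q : V × V | q.1 ≠ q.2 ∧ q.1 ≠ v ∧ q.2 ≠ v ∧ ¬ G.Adj q.1 q.2} with hT
  have himg : (fun p : Σ u : V, Σ w : V, G.Walk u w => (p.1, p.2.1)) '' S = T := by
    ext ⟨a, b⟩
    simp only [Set.mem_image, hT, Set.mem_setOf_eq]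
    constructor
    · rintro ⟨⟨u, w, p⟩, ⟨hg, hpt⟩, heq⟩
      dsimp only at hg hpt heq
      obtain ⟨rfl, rfl⟩ : a = u ∧ b = w := by simpa [Prod.ext_iff] using heq.symm
      obtain ⟨h1, h2, rfl⟩ := aux_canonical hint hg hpt
      have hd : G.dist a b = 2 := by simpa using hg.2.symm
      refine ⟨?_, h1.ne, h2.ne', ?_⟩
      · rintro rfl
        rw [dist_self] at hd
        omega
      · intro hadj'
        have := dist_eq_one_iff_adj.mpr hadj'
        omega
    · rintro ⟨hab, ha, hb, hnadj⟩
      refine ⟨⟨a, b, Walk.cons (hadj a ha).symm (Walk.cons (hadj b hb) Walk.nil)⟩,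
        ⟨⟨?_, ?_⟩, ?_, Ne.symm ha, Ne.symm hb⟩, rfl⟩
      · simp [Walk.cons_isPath_iff, Walk.support_cons, (hadj b hb).ne, ha, hab]
      · have hle : G.dist a b ≤ 2 := by
          simpa using dist_le (Walk.cons (hadj a ha).symm (Walk.cons (hadj b hb) Walk.nil))
        have h0 : G.dist a b ≠ 0 := fun h => hab
          ((Reachable.dist_eq_zero_iff ⟨Walk.cons (hadj a ha).symm
            (Walk.cons (hadj b hb) Walk.nil)⟩).mp h)
        have h1 : G.dist a b ≠ 1 := fun h => hnadj (dist_eq_one_iff_adj.mp h)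
        simp only [Walk.length_cons, Walk.length_nil]
        omega
      · simp [Walk.support_cons]
  have hinj : Set.InjOn (fun p : Σ u : V, Σ w : V, G.Walk u w => (p.1, p.2.1)) S := by
    rintro ⟨u, w, p⟩ hp ⟨u', w', p'⟩ hp' heq
    simp only [hS, Set.mem_setOf_eq] at hp hp'
    dsimp only at hp hp' heq
    obtain ⟨rfl, rfl⟩ : u = u' ∧ w = w' := by simpa [Prod.ext_iff] using heq
    obtain ⟨h1, h2, rfl⟩ := aux_canonical hint hp.1 hp.2
    obtain ⟨h1', h2', rfl⟩ := aux_canonical hint hp'.1 hp'.2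
    rfl
  rw [stress, ← hS, ← himg, Set.ncard_image_of_injOn hinj]

lemma aux_card_T [Fintype V] {v : V} (hno : ∀ a b : V, G.Adj a b → a = v ∨ b = v) :
    {q : V × V | q.1 ≠ q.2 ∧ q.1 ≠ v ∧ q.2 ≠ v ∧ ¬ G.Adj q.1 q.2}.ncard
      = (Fintype.card V - 1) * (Fintype.card V - 1) - (Fintype.card V - 1) := by
  classical
  have hset : {q : V × V | q.1 ≠ q.2 ∧ q.1 ≠ v ∧ q.2 ≠ v ∧ ¬ G.Adj q.1 q.2}
      = ↑((Finset.univ.erase v).offDiag) := by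
    ext ⟨a, b⟩
    simp only [Set.mem_setOf_eq, Finset.coe_sort_coe, Finset.mem_coe, Finset.mem_offDiag,
      Finset.mem_erase, Finset.mem_univ, and_true]
    constructor
    · rintro ⟨h1, h2, h3, -⟩
      exact ⟨h2, h3, h1⟩
    · rintro ⟨h2, h3, h1⟩
      refine ⟨h1, h2, h3, fun hadj => ?_⟩
      rcases hno a b hadj with rfl | rfl
      · exact h2 rfl
      · exact h3 rfl
  rw [hset, Set.ncard_coe_finset, Finset.offDiag_card, Finset.card_erase_of_mem
    (Finset.mem_univ v), Finset.card_univ]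

lemma aux_even (n : ℕ) (h : 1 ≤ n) : ∃ k, n * n - n = 2 * k := by
  obtain ⟨m, rfl⟩ := Nat.exists_eq_add_of_le h
  obtain ⟨k, hk⟩ := Nat.even_mul_succ_self m
  have h2 : (1 + m) * (1 + m) = (1 + m) * m + (1 + m) := by ring
  have h3 : (1 + m) * m = m * (m + 1) := by ring
  exact ⟨k, by omega⟩

lemma aux_mul_pred (n : ℕ) (h : 1 ≤ n) : n * (n - 1) = n * n - n := by
  obtain ⟨m, rfl⟩ := Nat.exists_eq_add_of_le h
  have h2 : (1 + m) * (1 + m) = (1 + m) * m + (1 + m) := by ring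
  have h3 : 1 + m - 1 = m := by omega
  rw [h3]
  omega

lemma aux_exists_internal {u w : V} (p : G.Walk u w) (hp : p.IsPath) (hl : 2 ≤ p.length) :
    ∃ x, p.PassesThrough x := by
  cases p with
  | nil => simp at hl
  | @cons u y w h q =>
    refine ⟨y, by simp [Walk.support_cons], h.ne', ?_⟩
    rintro rfl
    have h5 := ((Walk.cons_isPath_iff _ _).mp hp).1
    rw [Walk.isPath_iff_eq_nil] at h5
    subst h5
    simp at hl

noncomputable def aux_iso [Fintype V] {v : V} (n : ℕ) (hcard : Fintype.card V = n + 1)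
    (hadj : ∀ u, u ≠ v → G.Adj v u) (hno : ∀ a b : V, G.Adj a b → a = v ∨ b = v) :
    G ≃g completeBipartiteGraph (Fin 1) (Fin n) := by
  classical
  have h1 : Fintype.card {u : V // u = v} = 1 := Fintype.card_subtype_eq v
  have h2 : Fintype.card {u : V // ¬ u = v} = n := by
    rw [Fintype.card_subtype_compl, h1, hcard]
    omega
  let e : V ≃ (Fin 1 ⊕ Fin n) :=
    (Equiv.sumCompl (· = v)).symm.trans
      (Equiv.sumCongr (Fintype.equivFinOfCardEq h1) (Fintype.equivFinOfCardEq h2))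
  have he1 : ∀ (a : V) (h : a = v), ∃ i, e a = Sum.inl i := by
    intro a h
    refine ⟨Fintype.equivFinOfCardEq h1 ⟨a, h⟩, ?_⟩
    have hh := Equiv.sumCompl_symm_apply_of_pos (p := fun x => x = v) (a := a) h
    simp only [e, Equiv.trans_apply, Equiv.sumCongr_apply, hh, Sum.map_inl]
  have he2 : ∀ (a : V) (h : a ≠ v), ∃ j, e a = Sum.inr j := by
    intro a h
    refine ⟨Fintype.equivFinOfCardEq h2 ⟨a, h⟩, ?_⟩
    have hh := Equiv.sumCompl_symm_apply_of_neg (p := fun x => x = v) (a := a) h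
    simp only [e, Equiv.trans_apply, Equiv.sumCongr_apply, hh, Sum.map_inr]
  refine ⟨e, ?_⟩
  intro a b
  by_cases ha : a = v <;> by_cases hb : b = v
  · obtain ⟨i, hi⟩ := he1 a ha
    obtain ⟨j, hj⟩ := he1 b hb
    subst ha; subst hb
    simp [hi, hj, completeBipartiteGraph]
  · obtain ⟨i, hi⟩ := he1 a ha
    obtain ⟨j, hj⟩ := he2 b hb
    subst ha
    simp only [hi, hj, completeBipartiteGraph]
    simp [(hadj b hb)]
  · obtain ⟨i, hi⟩ := he2 a ha
    obtain ⟨j, hj⟩ := he1 b hb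
    subst hb
    simp only [hi, hj, completeBipartiteGraph]
    simp [(hadj a ha).symm]
  · obtain ⟨i, hi⟩ := he2 a ha
    obtain ⟨j, hj⟩ := he2 b hb
    rw [hi, hj]
    constructor
    · intro h
      simp [completeBipartiteGraph] at h
    · intro hab
      rcases hno a b hab with rfl | rfl
      · exact absurd rfl ha
      · exact absurd rfl hb

end SimpleGraph

/-- A finite connected graph on `n+1` vertices (`n ≥ 2`) is isomorphic to the star `K_{1,n}`
iff it has exactly one vertex of stress `n(n-1)/2`, all other vertices having stress zero. -/
theorem iso_star_iff_stress {V : Type*} [Fintype V] (G : SimpleGraph V) (n : ℕ) (hn : 2 ≤ n)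
    (hcard : Fintype.card V = n + 1) (hG : G.Connected) :
    Nonempty (G ≃g completeBipartiteGraph (Fin 1) (Fin n)) ↔
      ∃ v : V, G.stress v = n * (n - 1) / 2 ∧ ∀ w : V, w ≠ v → G.stress w = 0 := by
  classical
  have hmul : n * (n - 1) = n * n - n := SimpleGraph.aux_mul_pred n (by omega)
  constructor
  · rintro ⟨φ⟩
    set v := φ.symm (Sum.inl 0) with hv
    have hφv : φ v = Sum.inl 0 := φ.apply_symm_apply _
    have hmap : ∀ u : V, u ≠ v → ∃ j, φ u = Sum.inr j := by
      intro u hu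
      cases hφu : φ u with
      | inl i =>
        exfalso
        apply hu
        have hi : i = (0 : Fin 1) := Subsingleton.elim _ _
        rw [hv]
        calc u = φ.symm (φ u) := (φ.symm_apply_apply u).symm
        _ = φ.symm (Sum.inl 0) := by rw [hφu, hi]
      | inr j => exact ⟨j, rfl⟩
    have hadj : ∀ u, u ≠ v → G.Adj v u := by
      intro u hu
      obtain ⟨j, hj⟩ := hmap u hu
      have hK : (completeBipartiteGraph (Fin 1) (Fin n)).Adj (φ v) (φ u) := by
        rw [hj, hφv]
        simp [completeBipartiteGraph]
      exact φ.map_adj_iff.mp hK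
    have hno : ∀ a b : V, G.Adj a b → a = v ∨ b = v := by
      intro a b hab
      by_contra hcon
      push_neg at hcon
      obtain ⟨i, hi⟩ := hmap a hcon.1
      obtain ⟨j, hj⟩ := hmap b hcon.2
      have hK := φ.map_adj_iff.mpr hab
      rw [hi, hj] at hK
      simp [completeBipartiteGraph] at hK
    have hint : ∀ ⦃u w : V⦄ (p : G.Walk u w), G.IsGeodesic p →
        ∀ x, p.PassesThrough x → x = v := by
      intro u w p hg x hpt
      by_contra hx
      obtain ⟨a, b, hab, ha, hb⟩ :=
        SimpleGraph.aux_two_neighbors p hg.1 hpt.1 hpt.2.1 hpt.2.2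
      have ha' : a = v := (hno x a ha).resolve_left hx
      have hb' : b = v := (hno x b hb).resolve_left hx
      exact hab (ha'.trans hb'.symm)
    refine ⟨v, ?_, ?_⟩
    · rw [SimpleGraph.aux_stress_eq hadj hint, SimpleGraph.aux_card_T hno, hcard]
      simp only [Nat.add_sub_cancel]
      rw [hmul]
    · intro w hw
      apply SimpleGraph.aux_stress_zero
      intro a haw
      exact (hno w a haw).resolve_left hw
  · rintro ⟨v, hv, hw⟩
    have hint : ∀ ⦃u w : V⦄ (p : G.Walk u w), G.IsGeodesic p →
        ∀ x, p.PassesThrough x → x = v := by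
      intro u w p hg x hpt
      by_contra hx
      have h1 := SimpleGraph.aux_stress_pos hg hpt
      rw [hw x hx] at h1
      omega
    have hadj : ∀ u, u ≠ v → G.Adj v u := by
      intro u hu
      by_contra hnadj
      have hr : G.Reachable v u := hG.preconnected v u
      obtain ⟨p, hp⟩ := hr.exists_walk_length_eq_dist
      have hqp : p.bypass.IsPath := SimpleGraph.Walk.bypass_isPath p
      have hql : p.bypass.length = G.dist v u :=
        le_antisymm (hp ▸ SimpleGraph.Walk.length_bypass_le p) (SimpleGraph.dist_le p.bypass)
      have hd0 : G.dist v u ≠ 0 := fun h => (Ne.symm hu) ((hr.dist_eq_zero_iff).mp h)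
      have hd1 : G.dist v u ≠ 1 := fun h => hnadj (SimpleGraph.dist_eq_one_iff_adj.mp h)
      obtain ⟨x, hx⟩ := SimpleGraph.aux_exists_internal p.bypass hqp (by omega)
      have := hint p.bypass ⟨hqp, hql⟩ x hx
      exact hx.2.1 this
    have hno : ∀ a b : V, G.Adj a b → a = v ∨ b = v := by
      by_contra hcon
      push_neg at hcon
      obtain ⟨a, b, hab, ha, hb⟩ := hcon
      have hstress := SimpleGraph.aux_stress_eq hadj hint
      set F : Finset (V × V) := (Finset.univ.erase v).offDiag \ {(a, b), (b, a)} with hF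
      have habne : a ≠ b := hab.ne
      have hsubF : {q : V × V | q.1 ≠ q.2 ∧ q.1 ≠ v ∧ q.2 ≠ v ∧ ¬ G.Adj q.1 q.2} ⊆ ↑F := by
        rintro ⟨x, y⟩ ⟨h1, h2, h3, h4⟩
        simp only [hF, Finset.coe_sdiff, Set.mem_diff, Finset.mem_coe, Finset.mem_offDiag,
          Finset.mem_erase, Finset.mem_univ, and_true, Finset.mem_insert,
          Finset.mem_singleton, Prod.mk.injEq, not_or]
        refine ⟨⟨h2, h3, h1⟩, ?_, ?_⟩
        · rintro ⟨rfl, rfl⟩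
          exact h4 hab
        · rintro ⟨rfl, rfl⟩
          exact h4 hab.symm
      have hpairsub : ({(a, b), (b, a)} : Finset (V × V)) ⊆ (Finset.univ.erase v).offDiag := by
        intro q hq
        simp only [Finset.mem_insert, Finset.mem_singleton] at hq
        rcases hq with rfl | rfl <;>
          simp [Finset.mem_offDiag, Finset.mem_erase, ha, hb, habne, habne.symm]
      have hpaircard : ({(a, b), (b, a)} : Finset (V × V)).card = 2 := by
        rw [Finset.card_insert_of_notMem (by simp [Prod.ext_iff, habne]),
          Finset.card_singleton]
      have hcardF : F.card = (n * n - n) - 2 := by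
        rw [hF, Finset.card_sdiff_of_subset hpairsub, hpaircard, Finset.offDiag_card,
          Finset.card_erase_of_mem (Finset.mem_univ v), Finset.card_univ, hcard]
        simp only [Nat.add_sub_cancel]
      have hTle : {q : V × V | q.1 ≠ q.2 ∧ q.1 ≠ v ∧ q.2 ≠ v ∧ ¬ G.Adj q.1 q.2}.ncard
          ≤ F.card := by
        have := Set.ncard_le_ncard hsubF F.finite_toSet
        rwa [Set.ncard_coe_finset] at this
      rw [hcardF] at hTle
      rw [hstress] at hv
      obtain ⟨k, hk⟩ := SimpleGraph.aux_even n (by omega)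
      have hnn : 2 * n ≤ n * n := Nat.mul_le_mul_right n hn
      rw [hmul] at hv
      omega
    exact ⟨SimpleGraph.aux_iso n hcard hadj hno⟩
end

section
/- Let G be a finite connected simple graph of diameter 2. Then for every vertex v of G, str(v) equals the number of unordered pairs of non-adjacent vertices in the open neighborhood N(v) of v. -/
open SimpleGraph in
lemma key_struct {V : Type*} [Fintype V] {G : SimpleGraph V}
    (hG : G.Connected) (hd : G.diam = 2) {v u w : V} (q : G.Walk u w)
    (h1 : G.IsGeodesic q) (h2 : q.PassesThrough v) :
    ∃ (h : G.Adj u v) (h' : G.Adj v w), q = Walk.cons h (Walk.cons h' Walk.nil) := by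
  obtain ⟨hpath, hlen⟩ := h1
  obtain ⟨hmem, hvu, hvw⟩ := h2
  have hnt : G.ediam ≠ ⊤ := ediam_ne_top_of_diam_ne_zero (by omega)
  have hle : G.dist u w ≤ 2 := hd ▸ dist_le_diam hnt
  -- length ≥ 2
  have hlen2 : q.length = 2 := by
    match q, hlen with
    | .nil, _ => simp at hmem; exact absurd hmem hvu
    | .cons h .nil, _ => simp at hmem; rcases hmem with h|h <;> [exact absurd h hvu; exact absurd h hvw]
    | .cons h (.cons h' t), hlen =>
      simp only [Walk.length_cons] at hlen ⊢
      omega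
  match q, hlen2 with
  | .cons (v := x) h (.cons h' .nil), _ =>
    have : v = x := by
      simp only [Walk.support_cons, Walk.support_nil, List.mem_cons, List.mem_singleton] at hmem
      rcases hmem with h|h|h|h
      · exact absurd h hvu
      · exact h
      · exact absurd h hvw
      · simp at h
    subst this
    exact ⟨h, h', rfl⟩

open SimpleGraph

/-- In a finite connected graph of diameter 2, the stress of a vertex `v` equals the number
of unordered pairs of non-adjacent vertices in the open neighborhood of `v`. -/
theorem stress_eq_nonadjacent_pairs_of_diam_two {V : Type*} [Fintype V] (G : SimpleGraph V)
    (hG : G.Connected) (hd : G.diam = 2) (v : V) :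
    G.stress v =
      {p : V × V | p.1 ∈ G.neighborSet v ∧ p.2 ∈ G.neighborSet v ∧ p.1 ≠ p.2 ∧
        ¬ G.Adj p.1 p.2}.ncard / 2 := by
  unfold SimpleGraph.stress
  congr 1
  set S := {p : Σ u : V, Σ w : V, G.Walk u w |
    G.IsGeodesic p.2.2 ∧ p.2.2.PassesThrough v} with hS
  set T := {p : V × V | p.1 ∈ G.neighborSet v ∧ p.2 ∈ G.neighborSet v ∧ p.1 ≠ p.2 ∧
        ¬ G.Adj p.1 p.2} with hT
  have hinj : Set.InjOn (fun p : Σ u : V, Σ w : V, G.Walk u w => (p.1, p.2.1)) S := by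
    rintro ⟨u, w, q⟩ hq ⟨u', w', q'⟩ hq' heq
    simp only [Prod.mk.injEq] at heq
    obtain ⟨rfl, rfl⟩ := heq
    obtain ⟨a, b, rfl⟩ := key_struct hG hd q hq.1 hq.2
    obtain ⟨a', b', rfl⟩ := key_struct hG hd q' hq'.1 hq'.2
    rfl
  have himg : (fun p : Σ u : V, Σ w : V, G.Walk u w => (p.1, p.2.1)) '' S = T := by
    ext x
    constructor
    · rintro ⟨⟨u, w, q⟩, hq, rfl⟩
      obtain ⟨a, b, rfl⟩ := key_struct hG hd q hq.1 hq.2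
      obtain ⟨⟨_, hlen⟩, _⟩ := hq
      simp only [Walk.length_cons, Walk.length_nil] at hlen
      refine ⟨a.symm, b, ?_, ?_⟩
      · intro h
        simp only at h
        rw [h, (hG.dist_eq_zero_iff).mpr rfl] at hlen
        omega
      · intro hadj
        simp only at hadj
        rw [dist_eq_one_iff_adj.mpr hadj] at hlen
        omega
    · rintro ⟨hu, hw, hne, hnadj⟩
      obtain ⟨u, w⟩ := x
      simp only [mem_neighborSet] at hu hw
      simp only at hne hnadj
      refine ⟨⟨u, w, Walk.cons hu.symm (Walk.cons hw Walk.nil)⟩, ⟨⟨?_, ?_⟩, ?_⟩, rfl⟩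
      · simp only [Walk.isPath_def, Walk.support_cons, Walk.support_nil]
        simp [List.nodup_cons, hne, hu.ne', hw.ne]
      · have h1 : G.dist u w ≤ 2 := by
          simpa using dist_le (Walk.cons hu.symm (Walk.cons hw Walk.nil))
        have h2 : G.dist u w ≠ 0 := fun h => hne (hG.dist_eq_zero_iff.mp h)
        have h3 : G.dist u w ≠ 1 := fun h => hnadj (dist_eq_one_iff_adj.mp h)
        simp only [Walk.length_cons, Walk.length_nil]
        omega
      · exact ⟨by simp, hu.ne, hw.ne⟩
  rw [← himg, Set.ncard_image_of_injOn hinj]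
end

section
/- Let G be a strongly regular graph with parameters (v, k, λ, μ) where μ ≥ 1. Then every vertex x of G has str(x) = k(k-1-λ)/2; in particular, G is stress regular. -/
open SimpleGraph

section Aux

variable {V : Type*} [Fintype V] (G : SimpleGraph V) [DecidableRel G.Adj]

lemma aux_dist_le_two {n k ℓ μ : ℕ} (h : G.IsSRGWith n k ℓ μ) (hμ : 1 ≤ μ) (u w : V) :
    G.dist u w ≤ 2 := by
  by_cases huw : u = w
  · subst huw; simp [SimpleGraph.dist_self]
  by_cases hadj : G.Adj u w
  · exact (G.dist_le (Walk.cons hadj Walk.nil)).trans (by norm_num)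
  · have hc := h.of_not_adj huw hadj
    have hpos : 0 < Fintype.card (G.commonNeighbors u w) := by omega
    obtain ⟨⟨m, hm⟩⟩ := Fintype.card_pos_iff.mp hpos
    obtain ⟨h1, h2⟩ := G.mem_commonNeighbors.mp hm
    exact G.dist_le (Walk.cons h1 (Walk.cons h2.symm Walk.nil))

/-- The map sending a pair of neighbors of `x` to the length-2 walk through `x`. -/
def gw (x : V) (p : V × V) : Σ u : V, Σ w : V, G.Walk u w :=
  if h : G.Adj x p.1 ∧ G.Adj x p.2 then
    ⟨p.1, p.2, Walk.cons h.1.symm (Walk.cons h.2 Walk.nil)⟩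
  else ⟨x, x, Walk.nil⟩

lemma aux_dist_eq_two {u w x : V} (h1 : G.Adj x u) (h2 : G.Adj x w)
    (hna : ¬G.Adj u w) (hne : u ≠ w) : G.dist u w = 2 := by
  have hle : G.dist u w ≤ 2 := G.dist_le (Walk.cons h1.symm (Walk.cons h2 Walk.nil))
  have hr : G.Reachable u w := ⟨Walk.cons h1.symm (Walk.cons h2 Walk.nil)⟩
  have h0 : G.dist u w ≠ 0 := fun hh => hne (hr.dist_eq_zero_iff.mp hh)
  have h1' : G.dist u w ≠ 1 := fun hh => hna (dist_eq_one_iff_adj.mp hh)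
  omega

end Aux

/-- Every vertex of a strongly regular graph `srg(n, k, ℓ, μ)` with `μ ≥ 1` has stress
`k(k-1-ℓ)/2`; in particular, such a graph is stress regular. -/
theorem stress_of_isSRGWith {V : Type*} [Fintype V] (G : SimpleGraph V) [DecidableRel G.Adj]
    (n k ℓ μ : ℕ) (h : G.IsSRGWith n k ℓ μ) (hμ : 1 ≤ μ) :
    ∀ x : V, G.stress x = k * (k - 1 - ℓ) / 2 := by
  classical
  intro x
  set T : Set (V × V) :=
    {p : V × V | G.Adj x p.1 ∧ G.Adj x p.2 ∧ ¬G.Adj p.1 p.2 ∧ p.1 ≠ p.2} with hT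
  -- Step 1: the set of geodesics through x is the image of T under gw.
  have hS : {p : Σ u : V, Σ w : V, G.Walk u w |
      G.IsGeodesic p.2.2 ∧ p.2.2.PassesThrough x} = gw G x '' T := by
    ext s
    constructor
    · obtain ⟨u, w, p⟩ := s
      rintro ⟨⟨hpath, hlen⟩, hsup, hxu, hxw⟩
      have hle2 : p.length ≤ 2 := hlen ▸ aux_dist_le_two G h hμ u w
      cases p with
      | nil => simp [Walk.support_nil] at hsup; exact absurd hsup hxu
      | cons hadj q =>
        cases q with
        | nil =>
          simp [Walk.support_cons, Walk.support_nil] at hsup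
          rcases hsup with h1 | h2
          · exact absurd h1 hxu
          · exact absurd h2 hxw
        | cons hadj' q' =>
          cases q' with
          | cons h3 q'' => simp [Walk.length_cons] at hle2
          | nil =>
            rename_i b
            have hb : x = b := by
              simp [Walk.support_cons, Walk.support_nil] at hsup
              rcases hsup with h1 | h2 | h3
              · exact absurd h1 hxu
              · exact h2
              · exact absurd h3 hxw
            subst hb
            have hd2 : G.dist u w = 2 := by simpa using hlen.symm
            have hna : ¬G.Adj u w := fun hh => by
              rw [dist_eq_one_iff_adj.mpr hh] at hd2; omega
            have hne : u ≠ w := fun hh => by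
              subst hh; simp [SimpleGraph.dist_self] at hd2
            refine ⟨(u, w), ⟨hadj.symm, hadj', hna, hne⟩, ?_⟩
            rw [gw, dif_pos ⟨hadj.symm, hadj'⟩]
    · rintro ⟨⟨u', w'⟩, ⟨h1, h2, hna, hne⟩, rfl⟩
      simp only [Set.mem_setOf_eq]
      rw [gw, dif_pos ⟨h1, h2⟩]
      have hd2 : G.dist u' w' = 2 := aux_dist_eq_two G h1 h2 hna hne
      refine ⟨⟨?_, by simpa using hd2.symm⟩, ?_, ?_, ?_⟩
      · simp only [Walk.isPath_def, Walk.support_cons, Walk.support_nil,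
          List.nodup_cons, List.mem_cons, List.mem_singleton, List.not_mem_nil,
          not_false_iff, and_true, List.nodup_nil, not_or]
        exact ⟨⟨h1.ne', hne⟩, h2.ne⟩
      · simp [Walk.support_cons, Walk.support_nil]
      · exact h1.ne
      · exact h2.ne
  -- Step 2: injectivity of gw on T.
  have hinj : Set.InjOn (gw G x) T := by
    rintro ⟨u, w⟩ ⟨hu, hw, _, _⟩ ⟨u', w'⟩ ⟨hu', hw', _, _⟩ heq
    rw [gw, gw, dif_pos ⟨hu, hw⟩, dif_pos ⟨hu', hw'⟩] at heq
    have e1 : u = u' := congrArg (fun s => s.1) heq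
    have e2 : w = w' := congrArg (fun s => s.2.1) heq
    exact Prod.ext e1 e2
  -- Step 3: count T.
  set Tf : Finset (V × V) := Finset.univ.filter
    (fun p : V × V => G.Adj x p.1 ∧ G.Adj x p.2 ∧ ¬G.Adj p.1 p.2 ∧ p.1 ≠ p.2) with hTf
  have hTT : T = ↑Tf := by
    ext p; simp [hT, hTf]
  have hfiber : ∀ u ∈ G.neighborFinset x,
      (Tf.filter (fun p => p.1 = u)).card = k - 1 - ℓ := by
    intro u hu
    have hxu : G.Adj x u := by simpa using hu
    have himg : Tf.filter (fun p => p.1 = u) =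
        ((G.neighborFinset x).filter (fun w => ¬G.Adj u w ∧ u ≠ w)).image (Prod.mk u) := by
      ext ⟨a, b⟩
      simp only [hTf, Finset.mem_filter, Finset.mem_univ, true_and, Finset.mem_image,
        mem_neighborFinset]
      constructor
      · rintro ⟨⟨h1, h2, h3, h4⟩, h5⟩
        subst h5
        exact ⟨b, ⟨h2, h3, h4⟩, rfl⟩
      · rintro ⟨b', ⟨h2, h3, h4⟩, h5⟩
        cases h5
        exact ⟨⟨hxu, h2, h3, h4⟩, rfl⟩
    rw [himg, Finset.card_image_of_injective _ (fun a b hab => by simpa using hab)]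
    -- now count the second coordinates
    have hsplit :
        ((G.neighborFinset x).filter (fun w => ¬G.Adj u w ∧ u ≠ w)).card
          + ((G.neighborFinset x).filter (fun w => ¬(¬G.Adj u w ∧ u ≠ w))).card
          = (G.neighborFinset x).card := Finset.card_filter_add_card_filter_not _
    have hB : (G.neighborFinset x).filter (fun w => ¬(¬G.Adj u w ∧ u ≠ w))
        = insert u ((G.neighborFinset x).filter (fun w => G.Adj u w)) := by
      ext b
      simp only [Finset.mem_filter, Finset.mem_insert, mem_neighborFinset, not_and, not_not,
        ne_eq]
      constructor
      · rintro ⟨h1, h2⟩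
        by_cases hub : G.Adj u b
        · exact Or.inr ⟨h1, hub⟩
        · exact Or.inl (h2 hub).symm
      · rintro (rfl | ⟨h1, h2⟩)
        · exact ⟨hxu, fun _ => rfl⟩
        · exact ⟨h1, fun hc => absurd h2 hc⟩
    have hBcard : ((G.neighborFinset x).filter (fun w => ¬(¬G.Adj u w ∧ u ≠ w))).card
        = ℓ + 1 := by
      rw [hB, Finset.card_insert_of_notMem (by simp)]
      have hcn : Fintype.card (G.commonNeighbors x u)
          = ((G.neighborFinset x).filter (fun w => G.Adj u w)).card := by
        rw [← Set.toFinset_card]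
        congr 1
        ext b
        simp [mem_commonNeighbors]
      rw [← hcn, h.of_adj x u hxu]
    have hk : (G.neighborFinset x).card = k := by
      rw [card_neighborFinset_eq_degree]; exact h.regular x
    omega
  have hTfcard : Tf.card = k * (k - 1 - ℓ) := by
    rw [Finset.card_eq_sum_card_fiberwise
      (f := Prod.fst) (t := G.neighborFinset x)
      (fun p hp => by
        simp only [hTf, Finset.mem_coe, Finset.mem_filter, Finset.mem_univ, true_and] at hp
        simpa using hp.1)]
    rw [Finset.sum_congr rfl hfiber, Finset.sum_const, smul_eq_mul,
      card_neighborFinset_eq_degree, h.regular x]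
  -- Conclude.
  rw [SimpleGraph.stress, hS, Set.ncard_image_of_injOn hinj, hTT,
    Set.ncard_coe_finset, hTfcard]
end

section
/- Let G be a finite connected simple graph of diameter 2 that is k-stress regular with k ≥ 1, and let n be the smallest positive integer satisfying k ≤ n(n-1)/2. Then the minimum degree of G satisfies δ(G) ≥ n. -/
open SimpleGraph

/-- A walk of length at most 2 with an internal vertex `v` is exactly the
two-edge walk `u - v - w`. -/
lemma walk_canonical {V : Type*} {G : SimpleGraph V} {u w v : V} (p : G.Walk u w)
    (hlen : p.length ≤ 2) (hv : v ∈ p.support) (h1 : v ≠ u) (h2 : v ≠ w) :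
    ∃ (a : G.Adj u v) (b : G.Adj v w), p = Walk.cons a (Walk.cons b Walk.nil) := by
  match p with
  | .nil => simp at hv; exact absurd hv h1
  | .cons h .nil =>
      simp [Walk.support] at hv
      rcases hv with hv | hv
      · exact absurd hv h1
      · exact absurd hv h2
  | .cons (v := x) h (.cons h' .nil) =>
      simp [Walk.support] at hv
      rcases hv with hv | hv | hv
      · exact absurd hv h1
      · subst hv; exact ⟨h, h', rfl⟩
      · exact absurd hv h2
  | .cons _ (.cons _ (.cons _ _)) =>
      simp [Walk.length] at hlen

/-- If `G` is a `k`-stress regular connected graph (`k ≥ 1`) of diameter 2 and `n` is the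
smallest positive integer with `k ≤ n(n-1)/2`, then `δ(G) ≥ n`. -/
theorem minDegree_ge_of_stress_regular {V : Type*} [Fintype V] (G : SimpleGraph V)
    [DecidableRel G.Adj] (hG : G.Connected) (hd : G.diam = 2) (k n : ℕ) (hk : 1 ≤ k)
    (hreg : ∀ v : V, G.stress v = k)
    (hn : 0 < n) (hkn : k ≤ n * (n - 1) / 2)
    (hmin : ∀ m : ℕ, 0 < m → k ≤ m * (m - 1) / 2 → n ≤ m) :
    n ≤ G.minDegree := by
  classical
  have hne : Nonempty V := hG.nonempty
  obtain ⟨v, hv⟩ := G.exists_minimal_degree_vertex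
  set d := G.degree v with hdeg
  set S : Set (Σ u : V, Σ w : V, G.Walk u w) :=
    {p | G.IsGeodesic p.2.2 ∧ p.2.2.PassesThrough v} with hS
  have hstress : S.ncard / 2 = k := hreg v
  have hSncard : S.ncard ≠ 0 := by
    intro h0
    rw [h0] at hstress
    omega
  have hediam : G.ediam ≠ ⊤ :=
    G.ediam_ne_top_of_diam_ne_zero (by rw [hd]; norm_num)
  -- every element of S is a canonical length-2 walk through v
  have hcanon : ∀ p ∈ S, ∃ (a : G.Adj p.1 v) (b : G.Adj v p.2.1),
      p.2.2 = Walk.cons a (Walk.cons b Walk.nil) := by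
    rintro ⟨u, w, q⟩ ⟨⟨hpath, hlen⟩, hsup, hvu, hvw⟩
    have hle : q.length ≤ 2 := by
      rw [hlen]
      calc G.dist u w ≤ G.diam := G.dist_le_diam hediam
        _ = 2 := hd
    exact walk_canonical q hle hsup hvu hvw
  -- map to the pair of endpoints
  set f : (Σ u : V, Σ w : V, G.Walk u w) → V × V := fun p => (p.1, p.2.1) with hf
  have hinj : Set.InjOn f S := by
    rintro ⟨u1, w1, p1⟩ hp1 ⟨u2, w2, p2⟩ hp2 heq
    obtain ⟨a1, b1, hc1⟩ := hcanon _ hp1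
    obtain ⟨a2, b2, hc2⟩ := hcanon _ hp2
    simp only [hf, Prod.mk.injEq] at heq
    obtain ⟨h1, h2⟩ := heq
    dsimp at h1 h2 hc1 hc2
    subst h1; subst h2
    simp only [Sigma.mk.inj_iff, heq_eq_eq, true_and]
    rw [hc1, hc2]
  have hmapsto : f '' S ⊆ ↑((G.neighborFinset v).offDiag) := by
    rintro ⟨a, b⟩ ⟨⟨u, w, q⟩, hp, hfp⟩
    obtain ⟨ha, hb, hc⟩ := hcanon _ hp
    simp only [hf] at hfp
    obtain ⟨rfl, rfl⟩ := Prod.mk.injEq .. ▸ hfp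
    simp only [Finset.coe_offDiag, Set.mem_offDiag, Finset.mem_coe, mem_neighborFinset]
    refine ⟨ha.symm, hb, ?_⟩
    -- a ≠ b since the walk is a path
    obtain ⟨⟨hpath, _⟩, _⟩ := hp
    rw [hc] at hpath
    intro hab
    subst hab
    simp [Walk.isPath_def, Walk.support] at hpath
  have hcard : S.ncard ≤ d * d - d := by
    calc S.ncard = (f '' S).ncard := (Set.ncard_image_of_injOn hinj).symm
      _ ≤ ((G.neighborFinset v).offDiag : Set (V × V)).ncard :=
          Set.ncard_le_ncard hmapsto (Set.toFinite _)
      _ = (G.neighborFinset v).offDiag.card := Set.ncard_coe_finset _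
      _ = d * d - d := by rw [Finset.offDiag_card, G.card_neighborFinset_eq_degree]
  have hdd : d * d - d = d * (d - 1) := by
    cases d with
    | zero => simp
    | succ e => simp [Nat.succ_mul, Nat.mul_succ]
  have hkd : k ≤ d * (d - 1) / 2 := by
    rw [← hstress, ← hdd]
    exact Nat.div_le_div_right hcard
  have hdpos : 0 < d := by
    by_contra h
    push_neg at h
    interval_cases d
    simp at hkd
    omega
  rw [hv]
  exact hmin d hdpos hkd
end

section
/- Let G be a finite simple graph and let k = max{str(v) : v ∈ V(G)}. If n is a positive integer such that ⌊n/2⌋·⌈n/2⌉ > k, then every geodesic in G has length less than n. -/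
section Aux

variable {V : Type*} {G : SimpleGraph V} {u v w : V}

lemma dist_triangle_aux (h1 : G.Reachable u v) (h2 : G.Reachable v w) :
    G.dist u w ≤ G.dist u v + G.dist v w := by
  obtain ⟨p, hp⟩ := h1.exists_walk_length_eq_dist
  obtain ⟨q, hq⟩ := h2.exists_walk_length_eq_dist
  calc G.dist u w ≤ (p.append q).length := SimpleGraph.dist_le _
    _ = _ := by rw [SimpleGraph.Walk.length_append, hp, hq]

lemma geodesic_split [DecidableEq V] {p : G.Walk u w} (hp : p.length = G.dist u w)
    {x : V} (hx : x ∈ p.support) :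
    (p.takeUntil x hx).length = G.dist u x ∧ (p.dropUntil x hx).length = G.dist x w ∧
      G.dist u x + G.dist x w = G.dist u w := by
  have hsum : (p.takeUntil x hx).length + (p.dropUntil x hx).length = p.length := by
    rw [← SimpleGraph.Walk.length_append, SimpleGraph.Walk.take_spec]
  have h1 := SimpleGraph.dist_le (p.takeUntil x hx)
  have h2 := SimpleGraph.dist_le (p.dropUntil x hx)
  have h3 := dist_triangle_aux ⟨p.takeUntil x hx⟩ ⟨p.dropUntil x hx⟩
  omega

lemma length_drop_aux (p : G.Walk u v) (n : ℕ) :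
    (p.drop n).length = p.length - n := by
  induction p generalizing n with
  | nil => cases n <;> simp [SimpleGraph.Walk.drop]
  | cons h q ih =>
    cases n with
    | zero => simp [SimpleGraph.Walk.drop]
    | succ n => simp [SimpleGraph.Walk.drop, ih]

end Aux

/-- If `k` is the maximum stress of a vertex in `G` and `⌊n/2⌋·⌈n/2⌉ > k` for a positive
integer `n`, then every geodesic in `G` has length less than `n`. -/
theorem geodesic_length_lt {V : Type*} [Fintype V] [Nonempty V] (G : SimpleGraph V)
    (n : ℕ) (hn : 0 < n)
    (h : Finset.univ.sup G.stress < (n / 2) * ((n + 1) / 2)) :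
    ∀ (u w : V) (p : G.Walk u w), G.IsGeodesic p → p.length < n := by
  classical
  intro u w p hp
  by_contra hlt
  push_neg at hlt
  obtain ⟨hpath, hdist⟩ := hp
  set L := p.length with hL
  set m := n / 2 with hm
  have hm1 : 1 ≤ m := by
    rcases Nat.eq_zero_or_pos m with h0 | h1
    · rw [h0] at h; simp at h
    · exact h1
  have hmn : m < n := Nat.div_lt_self hn one_lt_two
  have hmL : m < L := lt_of_lt_of_le hmn hlt
  set v := p.getVert m with hv_def
  have hv : v ∈ p.support :=
    SimpleGraph.Walk.mem_support_iff_exists_getVert.2 ⟨m, rfl, by omega⟩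
  -- distances to the midpoint
  have hdvw : G.dist v w ≤ L - m := by
    have := SimpleGraph.dist_le (p.drop m)
    rwa [length_drop_aux] at this
  have hgv : p.reverse.getVert (L - m) = v := by
    rw [SimpleGraph.Walk.getVert_reverse]
    congr 1
    omega
  have hduv : G.dist u v ≤ m := by
    have := SimpleGraph.dist_le ((p.reverse.drop (L - m)).copy hgv rfl).reverse
    rw [SimpleGraph.Walk.length_reverse, SimpleGraph.Walk.length_copy,
      length_drop_aux, SimpleGraph.Walk.length_reverse] at this
    omega
  have htri : G.dist u w ≤ G.dist u v + G.dist v w :=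
    dist_triangle_aux ⟨((p.reverse.drop (L - m)).copy hgv rfl).reverse⟩ ⟨p.drop m⟩
  have hduv' : G.dist u v = m := by omega
  have hdvw' : G.dist v w = L - m := by omega
  -- split p at v
  set t := p.takeUntil v hv with ht_def
  set d := p.dropUntil v hv with hd_def
  obtain ⟨htlen, hdlen, -⟩ := geodesic_split hdist hv
  rw [hduv'] at htlen
  rw [hdvw'] at hdlen
  have htp : t.IsPath := hpath.takeUntil hv
  have hdp : d.IsPath := hpath.dropUntil hv
  -- the two vertex sets
  set A : Finset V := t.support.toFinset.erase v with hA_def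
  set B : Finset V := d.support.toFinset.erase v with hB_def
  have hAcard : A.card = m := by
    rw [hA_def, Finset.card_erase_of_mem (List.mem_toFinset.2 t.end_mem_support),
      List.toFinset_card_of_nodup htp.support_nodup, SimpleGraph.Walk.length_support, htlen]
    omega
  have hBcard : B.card = L - m := by
    rw [hB_def, Finset.card_erase_of_mem (List.mem_toFinset.2 d.start_mem_support),
      List.toFinset_card_of_nodup hdp.support_nodup, SimpleGraph.Walk.length_support, hdlen]
    omega
  have hpsup : p.support = t.support ++ d.support.tail := by
    conv_lhs => rw [← SimpleGraph.Walk.take_spec p hv]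
    rw [SimpleGraph.Walk.support_append]
  have hdisj : Disjoint A B := by
    rw [Finset.disjoint_left]
    intro x hxA hxB
    have hxt : x ∈ t.support := List.mem_toFinset.1 (Finset.mem_of_mem_erase hxA)
    have hxd : x ∈ d.support := List.mem_toFinset.1 (Finset.mem_of_mem_erase hxB)
    have hxv : x ≠ v := Finset.ne_of_mem_erase hxA
    have hnd := hpath.support_nodup
    rw [hpsup, List.nodup_append] at hnd
    have hxtail : x ∈ d.support.tail := by
      have := d.support_eq_cons
      rw [this] at hxd
      rcases List.mem_cons.1 hxd with h' | hxd
      · exact absurd h' hxv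
      · exact hxd
    exact hnd.2.2 x hxt x hxtail rfl
  -- geodesic segments through v
  have key : ∀ x, x ∈ t.support → ∀ y, y ∈ d.support →
      ∀ (hx : x ∈ t.support) (hy : y ∈ d.support),
      ((t.dropUntil x hx).append (d.takeUntil y hy)).length = G.dist x y ∧
        v ∈ ((t.dropUntil x hx).append (d.takeUntil y hy)).support := by
    intro x _ y _ hx hy
    obtain ⟨htx, hdx, hsx⟩ := geodesic_split (by rw [htlen, hduv']) hx
    obtain ⟨hty, hdy, hsy⟩ := geodesic_split (by rw [hdlen, hdvw']) hy
    have hxy_le : G.dist x y ≤ G.dist x v + G.dist v y :=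
      dist_triangle_aux ⟨t.dropUntil x hx⟩ ⟨d.takeUntil y hy⟩
    have hxy_ge : G.dist u w ≤ G.dist u x + (G.dist x y + G.dist y w) := by
      refine le_trans (dist_triangle_aux ⟨t.takeUntil x hx⟩
        ⟨(t.dropUntil x hx).append ((d.takeUntil y hy).append (d.dropUntil y hy))⟩) ?_
      exact Nat.add_le_add_left (dist_triangle_aux
        ⟨(t.dropUntil x hx).append (d.takeUntil y hy)⟩ ⟨d.dropUntil y hy⟩) _
    have hxy : G.dist x y = G.dist x v + G.dist v y := by
      rw [hduv'] at hsx
      rw [hdvw'] at hsy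
      omega
    constructor
    · rw [SimpleGraph.Walk.length_append, hdx, hty, hxy]
    · rw [SimpleGraph.Walk.mem_support_append_iff]
      exact Or.inl (t.dropUntil x hx).end_mem_support
  -- the two injections into the set of geodesics through v
  set S : Set (Σ a : V, Σ b : V, G.Walk a b) :=
    {q | G.IsGeodesic q.2.2 ∧ q.2.2.PassesThrough v} with hS_def
  have hSfin : S.Finite := by
    have hT : Set.Finite {q : Σ a : V, Σ b : V, G.Walk a b | q.2.2.IsPath} := by
      rw [← Set.finite_coe_iff]
      refine Finite.of_injective (fun q =>
        (⟨q.1.1, q.1.2.1, q.1.2.2, q.2, q.2.length_lt⟩ :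
          Σ a : V, Σ b : V, {p : G.Walk a b // p.IsPath ∧ p.length < Fintype.card V})) ?_
      rintro ⟨⟨a, b, q⟩, hq⟩ ⟨⟨a', b', q'⟩, hq'⟩ heq
      simp only [Sigma.mk.inj_iff] at heq
      obtain ⟨rfl, heq⟩ := heq
      obtain ⟨rfl, heq⟩ := Sigma.mk.inj_iff.1 (eq_of_heq heq)
      have := Subtype.ext_iff.1 (eq_of_heq heq)
      simp only at this
      subst this
      rfl
    exact hT.subset fun q hq => hq.1.1
  have hvne : ∀ x ∈ A, v ≠ x := fun x hx => (Finset.ne_of_mem_erase hx).symm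
  have hvne' : ∀ y ∈ B, v ≠ y := fun y hy => (Finset.ne_of_mem_erase hy).symm
  set f : V × V → Σ a : V, Σ b : V, G.Walk a b := fun z =>
    if hz : z.1 ∈ t.support ∧ z.2 ∈ d.support then
      ⟨z.1, z.2, (t.dropUntil z.1 hz.1).append (d.takeUntil z.2 hz.2)⟩
    else ⟨z.1, z.1, SimpleGraph.Walk.nil⟩ with hf_def
  set g : V × V → Σ a : V, Σ b : V, G.Walk a b := fun z =>
    if hz : z.1 ∈ t.support ∧ z.2 ∈ d.support then
      ⟨z.2, z.1, ((t.dropUntil z.1 hz.1).append (d.takeUntil z.2 hz.2)).reverse⟩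
    else ⟨z.1, z.1, SimpleGraph.Walk.nil⟩ with hg_def
  have hmemAB : ∀ z ∈ A ×ˢ B, z.1 ∈ t.support ∧ z.2 ∈ d.support := by
    intro z hz
    rw [Finset.mem_product] at hz
    exact ⟨List.mem_toFinset.1 (Finset.mem_of_mem_erase hz.1),
      List.mem_toFinset.1 (Finset.mem_of_mem_erase hz.2)⟩
  have hfS : ∀ z ∈ A ×ˢ B, f z ∈ S := by
    intro z hz
    have hz' := hmemAB z hz
    rw [Finset.mem_product] at hz
    simp only [hf_def]
    rw [dif_pos hz']
    obtain ⟨hlen, hsup⟩ := key z.1 hz'.1 z.2 hz'.2 hz'.1 hz'.2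
    exact ⟨⟨SimpleGraph.Walk.isPath_of_length_eq_dist _ hlen, hlen⟩, hsup,
      hvne _ hz.1, hvne' _ hz.2⟩
  have hgS : ∀ z ∈ A ×ˢ B, g z ∈ S := by
    intro z hz
    have hz' := hmemAB z hz
    rw [Finset.mem_product] at hz
    simp only [hg_def]
    rw [dif_pos hz']
    obtain ⟨hlen, hsup⟩ := key z.1 hz'.1 z.2 hz'.2 hz'.1 hz'.2
    have hlen' : ((t.dropUntil z.1 hz'.1).append (d.takeUntil z.2 hz'.2)).reverse.length
        = G.dist z.2 z.1 := by
      rw [SimpleGraph.Walk.length_reverse, hlen, SimpleGraph.dist_comm]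
    refine ⟨⟨SimpleGraph.Walk.isPath_of_length_eq_dist _ hlen', hlen'⟩, ?_,
      hvne' _ hz.2, hvne _ hz.1⟩
    rw [SimpleGraph.Walk.support_reverse, List.mem_reverse]
    exact hsup
  have hfinj : Set.InjOn f (A ×ˢ B) := by
    intro z hz z' hz' heq
    rw [← Finset.coe_product, Finset.mem_coe] at hz hz'
    have h1 := hmemAB z hz
    have h2 := hmemAB z' hz'
    simp only [hf_def] at heq
    rw [dif_pos h1, dif_pos h2] at heq
    have e1 : z.1 = z'.1 := congrArg Sigma.fst heq
    have e2 : z.2 = z'.2 := by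
      have := congrArg (fun q : Σ a : V, Σ b : V, G.Walk a b => q.2.1) heq
      simpa using this
    exact Prod.ext e1 e2
  have hginj : Set.InjOn g (A ×ˢ B) := by
    intro z hz z' hz' heq
    rw [← Finset.coe_product, Finset.mem_coe] at hz hz'
    have h1 := hmemAB z hz
    have h2 := hmemAB z' hz'
    simp only [hg_def] at heq
    rw [dif_pos h1, dif_pos h2] at heq
    have e2 : z.2 = z'.2 := congrArg Sigma.fst heq
    have e1 : z.1 = z'.1 := by
      have := congrArg (fun q : Σ a : V, Σ b : V, G.Walk a b => q.2.1) heq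
      simpa using this
    exact Prod.ext e1 e2
  -- count
  set F1 : Finset (Σ a : V, Σ b : V, G.Walk a b) := (A ×ˢ B).image f with hF1
  set F2 : Finset (Σ a : V, Σ b : V, G.Walk a b) := (A ×ˢ B).image g with hF2
  have hF1card : F1.card = m * (L - m) := by
    rw [hF1, Finset.card_image_of_injOn (by simpa using hfinj), Finset.card_product,
      hAcard, hBcard]
  have hF2card : F2.card = m * (L - m) := by
    rw [hF2, Finset.card_image_of_injOn (by simpa using hginj), Finset.card_product,
      hAcard, hBcard]
  have hF12 : Disjoint F1 F2 := by
    rw [Finset.disjoint_left]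
    intro q hq1 hq2
    rw [hF1, Finset.mem_image] at hq1
    rw [hF2, Finset.mem_image] at hq2
    obtain ⟨z, hz, rfl⟩ := hq1
    obtain ⟨z', hz', heq⟩ := hq2
    have h1 := hmemAB z hz
    have h2 := hmemAB z' hz'
    rw [Finset.mem_product] at hz hz'
    have : z'.2 = z.1 := by
      simp only [hf_def, hg_def] at heq
      rw [dif_pos h1] at heq
      rw [dif_pos h2] at heq
      exact congrArg Sigma.fst heq
    exact Finset.disjoint_left.1 hdisj hz.1 (this ▸ hz'.2)
  have hsub : F1 ∪ F2 ⊆ hSfin.toFinset := by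
    intro q hq
    rw [Finset.mem_union] at hq
    rw [Set.Finite.mem_toFinset]
    rcases hq with hq | hq
    · rw [hF1, Finset.mem_image] at hq
      obtain ⟨z, hz, rfl⟩ := hq
      exact hfS z hz
    · rw [hF2, Finset.mem_image] at hq
      obtain ⟨z, hz, rfl⟩ := hq
      exact hgS z hz
  have hcount : 2 * (m * (L - m)) ≤ S.ncard := by
    have := Finset.card_le_card hsub
    rw [Finset.card_union_of_disjoint hF12, hF1card, hF2card] at this
    rw [Set.ncard_eq_toFinset_card S hSfin]
    omega
  have hstress : m * ((n + 1) / 2) ≤ G.stress v := by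
    have h1 : m * (n - m) ≤ m * (L - m) := Nat.mul_le_mul_left m (by omega)
    have h2 : (n + 1) / 2 = n - m := by omega
    rw [SimpleGraph.stress, ← hS_def]
    rw [h2]
    omega
  have := Finset.le_sup (f := G.stress) (Finset.mem_univ v)
  omega
end

section
/- Let G be a finite connected simple graph that is not complete, and let v, w be vertices of G with e(v) = 1 (eccentricity of v equals 1). Then str(w) ≤ str(v), with equality if and only if e(w) = 1. -/
/-- The eccentricity of a vertex: the maximum distance from `v` to any vertex. -/
noncomputable def SimpleGraph.eccentr {V : Type*} [Fintype V] (G : SimpleGraph V) (v : V) : ℕ :=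
  Finset.univ.sup fun w => G.dist v w

open SimpleGraph

/-- The set of ordered pairs corresponding to geodesics through `z` (when diameter ≤ 2). -/
private def Tset {V : Type*} (G : SimpleGraph V) (z : V) : Set (V × V) :=
  {p | ¬ G.Adj p.1 p.2 ∧ p.1 ≠ p.2 ∧ G.Adj p.1 z ∧ G.Adj z p.2}

private lemma key_lemma {V : Type*} {G : SimpleGraph V} (hG : G.Connected)
    {v : V} (hadj : ∀ y, y ≠ v → G.Adj v y)
    {u x z : V} (p : G.Walk u x) (hp : G.IsGeodesic p) (hz : p.PassesThrough z) :
    ∃ (h1 : G.Adj u z) (h2 : G.Adj z x), ¬ G.Adj u x ∧ u ≠ x ∧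
      p = SimpleGraph.Walk.cons h1 (SimpleGraph.Walk.cons h2 SimpleGraph.Walk.nil) := by
  obtain ⟨hmem, hzu, hzx⟩ := hz
  obtain ⟨hpath, hlen⟩ := hp
  have hdle : G.dist u x ≤ 2 := by
    have h1 : G.dist u v ≤ 1 := by
      rcases eq_or_ne u v with rfl | h
      · simp [SimpleGraph.dist_self]
      · exact le_of_eq ((G.dist_eq_one_iff_adj).mpr (hadj u h).symm)
    have h2 : G.dist v x ≤ 1 := by
      rcases eq_or_ne x v with rfl | h
      · simp [SimpleGraph.dist_self]
      · exact le_of_eq ((G.dist_eq_one_iff_adj).mpr (hadj x h))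
    calc G.dist u x ≤ G.dist u v + G.dist v x := hG.dist_triangle
      _ ≤ 2 := by omega
  cases p with
  | nil => simp [SimpleGraph.Walk.support] at hmem; exact absurd hmem hzu
  | cons h q =>
    rename_i b
    cases q with
    | nil =>
      simp [SimpleGraph.Walk.support] at hmem
      rcases hmem with rfl | rfl
      · exact absurd rfl hzu
      · exact absurd rfl hzx
    | cons h' r =>
      rename_i c
      cases r with
      | nil =>
        simp only [SimpleGraph.Walk.support_cons, SimpleGraph.Walk.support_nil,
          List.mem_cons, List.mem_singleton] at hmem
        have hzb : z = b := by
          rcases hmem with rfl | rfl | (rfl | h) 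
          · exact absurd rfl hzu
          · rfl
          · exact absurd rfl hzx
          · simp at h
        subst hzb
        have hlen2 : G.dist u x = 2 := by
          simp [SimpleGraph.Walk.length_cons] at hlen; omega
        refine ⟨h, h', ?_, ?_, rfl⟩
        · intro hadj'
          have := (G.dist_eq_one_iff_adj).mpr hadj'
          omega
        · intro heq
          subst heq
          have := (hG.dist_eq_zero_iff (u := u) (v := u)).mpr rfl
          omega
      | cons h'' s =>
        exfalso
        simp only [SimpleGraph.Walk.length_cons] at hlen
        omega

private lemma stress_eq {V : Type*} [Fintype V] {G : SimpleGraph V} (hG : G.Connected)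
    {v : V} (hadj : ∀ y, y ≠ v → G.Adj v y) (z : V) :
    G.stress z = (Tset G z).ncard / 2 := by
  classical
  unfold SimpleGraph.stress
  congr 1
  set S : Set (Σ u : V, Σ w : V, G.Walk u w) :=
    {p | G.IsGeodesic p.2.2 ∧ p.2.2.PassesThrough z} with hS
  have hinj : Set.InjOn (fun p : Σ u : V, Σ w : V, G.Walk u w => (p.1, p.2.1)) S := by
    rintro ⟨u, x, p⟩ hp ⟨u', x', q⟩ hq heq
    simp only [Prod.mk.injEq] at heq
    obtain ⟨rfl, rfl⟩ := heq
    obtain ⟨h1, h2, _, _, hpeq⟩ := key_lemma hG hadj p hp.1 hp.2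
    obtain ⟨h1', h2', _, _, hqeq⟩ := key_lemma hG hadj q hq.1 hq.2
    have hpq : p = q := by rw [hpeq, hqeq]
    rw [hpq]
  have himg : (fun p : Σ u : V, Σ w : V, G.Walk u w => (p.1, p.2.1)) '' S = Tset G z := by
    ext ⟨u, x⟩
    constructor
    · rintro ⟨⟨u', x', p⟩, hp, heq⟩
      simp only [Prod.mk.injEq] at heq
      obtain ⟨rfl, rfl⟩ := heq
      obtain ⟨h1, h2, hnadj, hne, _⟩ := key_lemma hG hadj p hp.1 hp.2
      exact ⟨hnadj, hne, h1, h2⟩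
    · rintro ⟨hnadj, hne, h1, h2⟩
      refine ⟨⟨u, x, SimpleGraph.Walk.cons h1 (SimpleGraph.Walk.cons h2 SimpleGraph.Walk.nil)⟩,
        ⟨⟨?_, ?_⟩, ?_, ?_, ?_⟩, rfl⟩
      · rw [SimpleGraph.Walk.cons_isPath_iff, SimpleGraph.Walk.cons_isPath_iff]
        refine ⟨⟨SimpleGraph.Walk.IsPath.nil, by simpa using h2.ne⟩, ?_⟩
        simp only [SimpleGraph.Walk.support_cons, SimpleGraph.Walk.support_nil,
          List.mem_cons, List.mem_singleton]
        push_neg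
        exact ⟨h1.ne, hne, by simp⟩
      · -- length = dist
        have hle : G.dist u x ≤ 2 := by
          have := G.dist_le (SimpleGraph.Walk.cons h1 (SimpleGraph.Walk.cons h2 SimpleGraph.Walk.nil))
          simpa using this
        have h0 : G.dist u x ≠ 0 := fun h => hne ((hG.dist_eq_zero_iff).mp h)
        have hone : G.dist u x ≠ 1 := fun h => hnadj ((G.dist_eq_one_iff_adj).mp h)
        simp only [SimpleGraph.Walk.length_cons, SimpleGraph.Walk.length_nil]
        omega
      · simp [SimpleGraph.Walk.support_cons]
      · exact h1.ne'
      · exact h2.ne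
  rw [← himg, Set.ncard_image_of_injOn hinj]

private lemma ecc_one_iff {V : Type*} [Fintype V] {G : SimpleGraph V} (hG : G.Connected)
    [Nontrivial V] (z : V) :
    G.eccentr z = 1 ↔ ∀ y, y ≠ z → G.Adj z y := by
  constructor
  · intro h y hy
    have hle : G.dist z y ≤ 1 := by
      have := Finset.le_sup (f := fun w => G.dist z w) (Finset.mem_univ y)
      rw [show Finset.univ.sup (fun w => G.dist z w) = 1 from h] at this
      exact this
    have hpos := hG.pos_dist_of_ne (Ne.symm hy)
    exact (G.dist_eq_one_iff_adj).mp (by omega)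
  · intro h
    apply le_antisymm
    · apply Finset.sup_le
      intro y _
      rcases eq_or_ne y z with rfl | hy
      · simp [SimpleGraph.dist_self]
      · exact le_of_eq ((G.dist_eq_one_iff_adj).mpr (h y hy))
    · obtain ⟨y, hy⟩ := exists_ne z
      have : G.dist z y = 1 := (G.dist_eq_one_iff_adj).mpr (h y hy)
      calc (1 : ℕ) = G.dist z y := this.symm
        _ ≤ _ := Finset.le_sup (Finset.mem_univ y)

/-- In a connected non-complete graph, if `e(v) = 1` then `str(w) ≤ str(v)` for every
vertex `w`, with equality iff `e(w) = 1`. -/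
theorem stress_le_of_eccentricity_one {V : Type*} [Fintype V] (G : SimpleGraph V)
    (hG : G.Connected) (hnc : G ≠ ⊤) (v w : V) (hv : G.eccentr v = 1) :
    G.stress w ≤ G.stress v ∧ (G.stress w = G.stress v ↔ G.eccentr w = 1) := by
  classical
  have hnt : Nontrivial V := by
    by_contra h
    rw [not_nontrivial_iff_subsingleton] at h
    apply hnc
    ext a b
    simp only [top_adj]
    constructor
    · exact fun hab => hab.ne
    · intro hab; exact absurd (Subsingleton.elim a b) hab
  have hadj : ∀ y, y ≠ v → G.Adj v y := (ecc_one_iff hG v).mp hv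
  have hTfin : (Tset G v).Finite := Set.toFinite _
  have hTsub : Tset G w ⊆ Tset G v := by
    rintro ⟨u, x⟩ ⟨hnadj, hne, h1, h2⟩
    have hu : u ≠ v := by
      rintro rfl
      exact hnadj (hadj x hne.symm)
    have hx : x ≠ v := by
      rintro rfl
      exact hnadj ((hadj u hne).symm)
    exact ⟨hnadj, hne, (hadj u hu).symm, hadj x hx⟩
  have hsw : G.stress w = (Tset G w).ncard / 2 := stress_eq hG hadj w
  have hsv : G.stress v = (Tset G v).ncard / 2 := stress_eq hG hadj v
  have hle : G.stress w ≤ G.stress v := by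
    rw [hsw, hsv]
    exact Nat.div_le_div_right (Set.ncard_le_ncard hTsub hTfin)
  refine ⟨hle, ?_, ?_⟩
  · -- stress w = stress v → ecc w = 1
    intro heq
    by_contra hew
    have : ∃ y, y ≠ w ∧ ¬ G.Adj w y := by
      by_contra hcon
      push_neg at hcon
      exact hew ((ecc_one_iff hG w).mpr fun y hy => hcon y hy)
    obtain ⟨y, hyw, hnwy⟩ := this
    have hwv : w ≠ v := by
      rintro rfl
      exact hnwy (hadj y hyw)
    have hyv : y ≠ v := by
      rintro rfl
      exact hnwy ((hadj w hwv).symm)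
    have hm1 : (w, y) ∈ Tset G v := ⟨hnwy, hyw.symm, (hadj w hwv).symm, hadj y hyv⟩
    have hm2 : (y, w) ∈ Tset G v :=
      ⟨fun hadj' => hnwy hadj'.symm, hyw, (hadj y hyv).symm, hadj w hwv⟩
    have hn1 : (w, y) ∉ Tset G w := fun ⟨_, _, h1, _⟩ => G.irrefl h1
    have hn2 : (y, w) ∉ Tset G w := fun ⟨_, _, _, h2⟩ => G.irrefl h2
    have hsubset : insert (w, y) (insert (y, w) (Tset G w)) ⊆ Tset G v := by
      intro p hp
      rcases Set.mem_insert_iff.mp hp with rfl | hp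
      · exact hm1
      rcases Set.mem_insert_iff.mp hp with rfl | hp
      · exact hm2
      · exact hTsub hp
    have hne12 : (w, y) ≠ (y, w) := fun h => hyw (congrArg Prod.fst h).symm
    have hcard : (Tset G w).ncard + 2 ≤ (Tset G v).ncard := by
      have h1 : (insert (w, y) (insert (y, w) (Tset G w))).ncard = (Tset G w).ncard + 2 := by
        rw [Set.ncard_insert_of_notMem (by
          simp only [Set.mem_insert_iff]
          push_neg
          exact ⟨hne12, hn1⟩) (Set.Finite.insert _ (Set.toFinite _)),
          Set.ncard_insert_of_notMem hn2 (Set.toFinite _)]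
      have h2 := Set.ncard_le_ncard hsubset hTfin
      omega
    rw [hsw, hsv] at heq
    omega
  · -- ecc w = 1 → stress w = stress v
    intro hew
    have hadjw : ∀ y, y ≠ w → G.Adj w y := (ecc_one_iff hG w).mp hew
    have hTsub' : Tset G v ⊆ Tset G w := by
      rintro ⟨u, x⟩ ⟨hnadj, hne, h1, h2⟩
      have hu : u ≠ w := by
        rintro rfl
        exact hnadj (hadjw x hne.symm)
      have hx : x ≠ w := by
        rintro rfl
        exact hnadj ((hadjw u hne).symm)
      exact ⟨hnadj, hne, (hadjw u hu).symm, hadjw x hx⟩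
    rw [hsw, hsv, Set.Subset.antisymm hTsub hTsub']
end

section
/- Let G be a finite connected simple graph that is k-stress regular with k ≥ 1. Then every vertex v of G has eccentricity e(v) > 1. -/
namespace SimpleGraph

variable {V : Type*}

lemma two_le_length_of_passesThrough {G : SimpleGraph V} {u w x : V} {p : G.Walk u w}
    (h : p.PassesThrough x) : 2 ≤ p.length := by
  obtain ⟨hx, hxu, hxw⟩ := h
  cases p with
  | nil => simp at hx; exact absurd hx hxu
  | cons h q =>
    cases q with
    | nil => simp at hx; rcases hx with h1 | h1 <;> [exact absurd h1 hxu; exact absurd h1 hxw]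
    | cons h' q' => simp only [Walk.length_cons]; omega

lemma walk_length_two_through {G : SimpleGraph V} {c d x : V} {p : G.Walk c d}
    (hlen : p.length = 2) (hx : x ∈ p.support) (hxc : x ≠ c) (hxd : x ≠ d) :
    ∃ (h1 : G.Adj c x) (h2 : G.Adj x d), p = Walk.cons h1 (Walk.cons h2 Walk.nil) := by
  cases p with
  | nil => simp at hlen
  | cons h q =>
    rename_i m
    cases q with
    | nil => simp at hlen
    | cons h' q' =>
      rename_i m'
      cases q' with
      | nil =>
        have hxm : x = m := by
          simp [Walk.support_cons] at hx
          rcases hx with h1 | h1 | h1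
          · exact absurd h1 hxc
          · exact h1
          · exact absurd h1 hxd
        subst hxm
        exact ⟨h, h', rfl⟩
      | cons h'' q'' => simp [Walk.length_cons] at hlen

end SimpleGraph

/-- In a connected `k`-stress regular graph with `k ≥ 1`, every vertex has
eccentricity greater than 1. -/
theorem one_lt_eccentricity_of_stress_regular {V : Type*} [Fintype V] (G : SimpleGraph V)
    (hG : G.Connected) (k : ℕ) (hk : 1 ≤ k) (hreg : ∀ v : V, G.stress v = k) :
    ∀ v : V, 1 < G.eccentr v := by
  intro v
  by_contra hv
  push_neg at hv
  -- v is universal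
  have hdist : ∀ w : V, G.dist v w ≤ 1 := fun w =>
    le_trans (Finset.le_sup (Finset.mem_univ w)) hv
  have hadj : ∀ w : V, w ≠ v → G.Adj v w := by
    intro w hw
    have h1 : G.dist v w = 1 :=
      le_antisymm (hdist w) (hG.pos_dist_of_ne (Ne.symm hw))
    exact SimpleGraph.dist_eq_one_iff_adj.mp h1
  have hdiam : ∀ c d : V, G.dist c d ≤ 2 := by
    intro c d
    calc G.dist c d ≤ G.dist c v + G.dist v d := hG.dist_triangle
    _ ≤ 1 + 1 := by
        have := hdist c
        rw [SimpleGraph.dist_comm] at this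
        exact Nat.add_le_add this (hdist d)
    _ = 2 := rfl
  -- the sets
  set S : V → Set (Σ u : V, Σ w : V, G.Walk u w) := fun x =>
    {p | G.IsGeodesic p.2.2 ∧ p.2.2.PassesThrough x} with hS
  set T : V → Set (V × V) := fun x =>
    {cd | G.Adj cd.1 x ∧ G.Adj x cd.2 ∧ G.dist cd.1 cd.2 = 2} with hT
  have hstress : ∀ x : V, G.stress x = (S x).ncard / 2 := fun x => rfl
  -- any geodesic through x has the canonical form
  have hform : ∀ (x : V) (p : Σ u : V, Σ w : V, G.Walk u w), p ∈ S x →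
      ∃ (h1 : G.Adj p.1 x) (h2 : G.Adj x p.2.1),
        p.2.2 = SimpleGraph.Walk.cons h1 (SimpleGraph.Walk.cons h2 SimpleGraph.Walk.nil) ∧
        G.dist p.1 p.2.1 = 2 := by
    rintro x ⟨c, d, p⟩ ⟨⟨hpath, hlen⟩, hpass⟩
    have h2le : 2 ≤ p.length := SimpleGraph.two_le_length_of_passesThrough hpass
    have hd2 : G.dist c d = 2 := le_antisymm (hdiam c d) (hlen ▸ h2le)
    have hlen2 : p.length = 2 := hlen.trans hd2
    obtain ⟨h1, h2, hp⟩ :=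
      SimpleGraph.walk_length_two_through hlen2 hpass.1 hpass.2.1 hpass.2.2
    exact ⟨h1, h2, hp, hd2⟩
  -- bijection S x ≃ T x via endpoints
  have hbij : ∀ x : V, Set.BijOn (fun p : Σ u : V, Σ w : V, G.Walk u w => (p.1, p.2.1))
      (S x) (T x) := by
    intro x
    refine ⟨?_, ?_, ?_⟩
    · rintro ⟨c, d, p⟩ hp
      obtain ⟨h1, h2, -, hd2⟩ := hform x _ hp
      exact ⟨h1, h2, hd2⟩
    · rintro ⟨c, d, p⟩ hp ⟨c', d', p'⟩ hp' heq
      simp only [Prod.mk.injEq] at heq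
      obtain ⟨rfl, rfl⟩ := heq
      obtain ⟨h1, h2, hpeq, -⟩ := hform x _ hp
      obtain ⟨h1', h2', hpeq', -⟩ := hform x _ hp'
      simp only at hpeq hpeq'
      rw [show p = p' from hpeq.trans hpeq'.symm]
    · rintro ⟨c, d⟩ ⟨h1, h2, hd2⟩
      have hcx : c ≠ x := h1.ne
      have hxd : x ≠ d := h2.ne
      have hcd : c ≠ d := by
        intro h; subst h; simp [SimpleGraph.dist_self] at hd2
      refine ⟨⟨c, d, SimpleGraph.Walk.cons h1 (SimpleGraph.Walk.cons h2 SimpleGraph.Walk.nil)⟩,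
        ⟨⟨?_, ?_⟩, ?_⟩, rfl⟩
      · simp [SimpleGraph.Walk.isPath_def, hcx, hxd, hcd]
      · simpa using hd2.symm
      · exact ⟨by simp, hcx.symm, hxd⟩
  have hncard : ∀ x : V, (S x).ncard = (T x).ncard := by
    intro x
    rw [← (hbij x).image_eq, Set.ncard_image_of_injOn (hbij x).injOn]
  -- get a pair (a, b) in T v
  have hSv : (S v).Nonempty := by
    apply Set.nonempty_of_ncard_ne_zero
    intro h0
    have := hreg v
    rw [hstress v, h0] at this
    omega
  obtain ⟨⟨a, b, q⟩, hp⟩ := hSv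
  obtain ⟨h1, h2, hd2⟩ : (a, b) ∈ T v := (hbij v).mapsTo hp
  have hab : a ≠ b := by intro h; rw [h] at hd2; simp [SimpleGraph.dist_self] at hd2
  have hav : a ≠ v := h1.ne
  have hbv : b ≠ v := h2.ne'
  -- T a ⊆ T v, plus two extra elements
  have hsub : insert (a, b) (insert (b, a) (T a)) ⊆ T v := by
    rintro ⟨c, d⟩ hcd
    rcases hcd with h | h | h
    · obtain ⟨rfl, rfl⟩ := Prod.mk.injEq .. ▸ h
      exact ⟨h1, h2, hd2⟩
    · rw [Prod.ext_iff] at h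
      obtain ⟨rfl, rfl⟩ := h
      exact ⟨h2.symm, h1.symm, by rwa [SimpleGraph.dist_comm]⟩
    · obtain ⟨hc, hd, hcd2⟩ : G.Adj c a ∧ G.Adj a d ∧ G.dist c d = 2 := h
      have hcv : c ≠ v := by
        intro hcv; rw [hcv] at hcd2
        have := hdist d
        omega
      have hdv : d ≠ v := by
        intro hdv; rw [hdv] at hcd2
        have := hdist c
        rw [SimpleGraph.dist_comm] at this
        omega
      exact ⟨(hadj c hcv).symm, hadj d hdv, hcd2⟩
  have hnotmem1 : (b, a) ∉ T a := by
    rintro ⟨-, hba, -⟩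
    exact G.irrefl hba
  have hnotmem2 : (a, b) ∉ insert (b, a) (T a) := by
    rintro (h | ⟨hba, -, -⟩)
    · rw [Prod.ext_iff] at h
      exact hab h.1
    · exact G.irrefl hba
  have hTfin : ∀ x : V, (T x).Finite := fun x => Set.toFinite _
  have hcard2 : (T a).ncard + 2 ≤ (T v).ncard := by
    have := Set.ncard_le_ncard hsub (hTfin v)
    rwa [Set.ncard_insert_of_notMem hnotmem2 ((hTfin a).insert _),
      Set.ncard_insert_of_notMem hnotmem1 (hTfin a)] at this
  have hka := hreg a
  have hkv := hreg v
  rw [hstress, hncard] at hka hkv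
  omega
end
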